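/- arXiv:2512.04994 — 9 statements merged into one kernel-verified Lean document; each statement's English description precedes it below -/
import Mathlib

section
/- Let n ≥ 1 and let θ be a real number with 0 < θ < 1/(2n+1). Let (a_k)_{k∈ℕ} be a sequence of positive reals satisfying a_{k+1} ≤ θ·a_k for all k. Then the map h from the set of sequences u : ℕ → {-n,...,n} to ℝ defined by h(u) = Σ_k a_k·u_k is well-defined (the series converges) and injective. -/
/-!
Since `a (k + j) ≤ θ ^ j * a k`, the sequence `a` is dominated by a geometric series, which gives
convergence. For injectivity, let `c = u - v`, so `|c k| ≤ 2n`, and let `m` be the first index with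
`c m ≠ 0`. If both sums agree, then `a m * c m` cancels the tail `∑_{k > m} a k * c k`; but the
former has absolute value at least `a m`, the latter at most `2n * θ / (1 - θ) * a m < a m`.
-/

section GeometricDecay

variable {a : ℕ → ℝ} {θ : ℝ}

theorem le_pow_mul_of_le_mul_succ (hθ : 0 ≤ θ) (hd : ∀ k, a (k + 1) ≤ θ * a k) (m j : ℕ) :
    a (j + m) ≤ θ ^ j * a m := by
  simpa using le_geom (u := fun j => a (j + m)) hθ j fun k _ => by
    simpa [add_right_comm] using hd (k + m)

theorem norm_mul_le_of_le_mul_succ (ha : ∀ k, 0 ≤ a k) (hθ : 0 ≤ θ)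
    (hd : ∀ k, a (k + 1) ≤ θ * a k) {c : ℕ → ℝ} {N : ℝ} (hc : ∀ k, |c k| ≤ N) (m j : ℕ) :
    ‖a (j + m) * c (j + m)‖ ≤ N * a m * θ ^ j := by
  rw [Real.norm_eq_abs, abs_mul, abs_of_nonneg (ha _)]
  calc a (j + m) * |c (j + m)| ≤ θ ^ j * a m * N :=
        mul_le_mul (le_pow_mul_of_le_mul_succ hθ hd m j) (hc _) (abs_nonneg _)
          (mul_nonneg (pow_nonneg hθ j) (ha m))
    _ = N * a m * θ ^ j := by ring

theorem summable_mul_of_le_mul_succ (ha : ∀ k, 0 ≤ a k) (hθ0 : 0 ≤ θ) (hθ1 : θ < 1)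
    (hd : ∀ k, a (k + 1) ≤ θ * a k) {c : ℕ → ℝ} {N : ℝ} (hc : ∀ k, |c k| ≤ N) :
    Summable fun k => a k * c k :=
  .of_norm_bounded ((summable_geometric_of_lt_one hθ0 hθ1).mul_left (N * a 0))
    (norm_mul_le_of_le_mul_succ ha hθ0 hd hc 0)

theorem abs_tsum_tail_le_of_le_mul_succ (ha : ∀ k, 0 ≤ a k) (hθ0 : 0 ≤ θ) (hθ1 : θ < 1)
    (hd : ∀ k, a (k + 1) ≤ θ * a k) {c : ℕ → ℝ} {N : ℝ} (hc : ∀ k, |c k| ≤ N) (m : ℕ) :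
    |∑' j, a (j + (m + 1)) * c (j + (m + 1))| ≤ N * θ * a m / (1 - θ) := by
  have hgeo := (hasSum_geometric_of_lt_one hθ0 hθ1).mul_left (N * θ * a m)
  refine tsum_of_norm_bounded (f := fun j => a (j + (m + 1)) * c (j + (m + 1))) hgeo fun j => ?_
  calc ‖a (j + (m + 1)) * c (j + (m + 1))‖ ≤ N * a (m + 1) * θ ^ j :=
        norm_mul_le_of_le_mul_succ ha hθ0 hd hc (m + 1) j
    _ ≤ N * (θ * a m) * θ ^ j := by
        have hN : 0 ≤ N := (abs_nonneg _).trans (hc 0)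
        gcongr
        exact hd m
    _ = N * θ * a m * θ ^ j := by ring

theorem eq_zero_of_tsum_mul_eq_zero (ha : ∀ k, 0 < a k) (hθ0 : 0 ≤ θ)
    (hd : ∀ k, a (k + 1) ≤ θ * a k) {c : ℕ → ℤ} {N : ℕ} (hc : ∀ k, |c k| ≤ N)
    (hθN : θ * (N + 1) < 1) (h0 : ∑' k, a k * c k = 0) : c = 0 := by
  have hθ1 : θ < 1 := by nlinarith [(N.cast_nonneg : (0 : ℝ) ≤ N)]
  have hcR : ∀ k, |(c k : ℝ)| ≤ N := fun k => by exact_mod_cast hc k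
  have hsum := summable_mul_of_le_mul_succ (fun k => (ha k).le) hθ0 hθ1 hd hcR
  funext m
  induction m using Nat.strong_induction_on with
  | _ m ih =>
    have hprefix : ∑ k ∈ Finset.range m, a k * c k = 0 :=
      Finset.sum_eq_zero fun k hk => by simp [ih k (Finset.mem_range.mp hk)]
    have hsplit : a m * c m = -∑' j, a (j + (m + 1)) * c (j + (m + 1)) := by
      have := hsum.sum_add_tsum_nat_add (m + 1)
      rw [Finset.sum_range_succ, hprefix, h0] at this
      linarith
    by_contra hcm
    have hlead : a m ≤ |a m * c m| := by
      rw [abs_mul, abs_of_pos (ha m)]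
      exact le_mul_of_one_le_right (ha m).le (by exact_mod_cast Int.one_le_abs hcm)
    have htail := abs_tsum_tail_le_of_le_mul_succ (fun k => (ha k).le) hθ0 hθ1 hd hcR m
    rw [hsplit, abs_neg] at hlead
    rw [le_div_iff₀ (by linarith)] at htail
    nlinarith [ha m]

end GeometricDecay

theorem cantor_injective_general (n : ℕ) (θ : ℝ) (hθ0 : 0 < θ)
    (hθ : θ < 1 / (2 * n + 1))
    (a : ℕ → ℝ) (ha : ∀ k, 0 < a k) (hd : ∀ k, a (k + 1) ≤ θ * a k) :
    (∀ u : ℕ → ℤ, (∀ k, |u k| ≤ (n : ℤ)) → Summable (fun k => a k * (u k : ℝ))) ∧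
    (∀ u v : ℕ → ℤ, (∀ k, |u k| ≤ (n : ℤ)) → (∀ k, |v k| ≤ (n : ℤ)) →
      (∑' k, a k * (u k : ℝ)) = (∑' k, a k * (v k : ℝ)) → u = v) := by
  have hθN : θ * ((2 * n : ℕ) + 1) < 1 := by
    push_cast
    rwa [lt_div_iff₀ (by positivity)] at hθ
  have hθ1 : θ < 1 := by nlinarith [(n.cast_nonneg : (0 : ℝ) ≤ n)]
  have hsum : ∀ u : ℕ → ℤ, (∀ k, |u k| ≤ (n : ℤ)) → Summable (fun k => a k * (u k : ℝ)) :=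
    fun u hu => summable_mul_of_le_mul_succ (fun k => (ha k).le) hθ0.le hθ1 hd
      (c := fun k => (u k : ℝ)) (N := n) fun k => by exact_mod_cast hu k
  refine ⟨hsum, fun u v hu hv huv => sub_eq_zero.mp ?_⟩
  have hdiff : ∀ k, |(u - v) k| ≤ (2 * n : ℕ) := fun k => by
    push_cast [Pi.sub_apply]
    linarith [abs_sub (u k) (v k), hu k, hv k]
  refine eq_zero_of_tsum_mul_eq_zero ha hθ0.le hd hdiff hθN ?_
  simp only [Pi.sub_apply, Int.cast_sub, mul_sub]
  rw [(hsum u hu).tsum_sub (hsum v hv), huv, sub_self]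

/-- For `n ≥ 1`, `0 < θ < 1/(2n+1)`, and a positive sequence `a` with
`a (k+1) ≤ θ * a k`, the map `u ↦ ∑ k, a k * u k`, defined on sequences
`u : ℕ → ℤ` with `|u k| ≤ n`, is well-defined (the series converges) and injective. -/
theorem cantor_injective (n : ℕ) (hn : 1 ≤ n) (θ : ℝ) (hθ0 : 0 < θ)
    (hθ : θ < 1 / (2 * n + 1))
    (a : ℕ → ℝ) (ha : ∀ k, 0 < a k) (hd : ∀ k, a (k + 1) ≤ θ * a k) :
    (∀ u : ℕ → ℤ, (∀ k, |u k| ≤ (n : ℤ)) → Summable (fun k => a k * (u k : ℝ))) ∧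
    (∀ u v : ℕ → ℤ, (∀ k, |u k| ≤ (n : ℤ)) → (∀ k, |v k| ≤ (n : ℤ)) →
      (∑' k, a k * (u k : ℝ)) = (∑' k, a k * (v k : ℝ)) → u = v) :=
  cantor_injective_general n θ hθ0 hθ a ha hd
end

section
/- Let n ≥ 1, 0 < θ < 1/(2n+1), and let (a_k) be a sequence of positive reals with a_{k+1} ≤ θ·a_k for all k. Then the image of the map h(u) = Σ_k a_k·u_k, defined on sequences u : ℕ → {-n,...,n}, has Lebesgue measure zero. -/
/-!
Fixing the first `m` digits `u 0, …, u (m - 1)` pins `x` down to within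
`n * ∑_{k ≥ m} a k ≤ n * a m / (1 - θ) = O(θ ^ m)`. So the set is covered by `(2n+1) ^ m`
intervals of length `O(θ ^ m)`, of total length `O(((2n+1) θ) ^ m)`, which tends to `0`.
-/

open MeasureTheory Filter Finset

section GeometricDecay

variable {a : ℕ → ℝ} {θ : ℝ}

theorem le_pow_mul_of_succ_le_mul (hθ : 0 ≤ θ) (hd : ∀ k, a (k + 1) ≤ θ * a k)
    (m k : ℕ) :
    a (k + m) ≤ θ ^ k * a m := by
  simpa using le_geom (u := fun k ↦ a (k + m)) hθ k fun j _ ↦ by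
    simpa [Nat.add_right_comm] using hd (j + m)

theorem summable_of_succ_le_mul (ha : ∀ k, 0 ≤ a k) (hθ0 : 0 ≤ θ) (hθ1 : θ < 1)
    (hd : ∀ k, a (k + 1) ≤ θ * a k) : Summable a :=
  ((summable_geometric_of_lt_one hθ0 hθ1).mul_right (a 0)).of_nonneg_of_le ha fun k ↦ by
    simpa using le_pow_mul_of_succ_le_mul hθ0 hd 0 k

theorem tsum_nat_add_le_div_of_succ_le_mul (ha : ∀ k, 0 ≤ a k) (hθ0 : 0 ≤ θ) (hθ1 : θ < 1)
    (hd : ∀ k, a (k + 1) ≤ θ * a k) (m : ℕ) : ∑' k, a (k + m) ≤ a m / (1 - θ) := by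
  have hgeom := (summable_geometric_of_lt_one hθ0 hθ1).mul_right (a m)
  calc ∑' k, a (k + m) ≤ ∑' k, θ ^ k * a m :=
        Summable.tsum_le_tsum (le_pow_mul_of_succ_le_mul hθ0 hd m)
          ((summable_nat_add_iff m).2 (summable_of_succ_le_mul ha hθ0 hθ1 hd)) hgeom
    _ = a m / (1 - θ) := by rw [tsum_mul_right, tsum_geometric_of_lt_one hθ0 hθ1, inv_mul_eq_div]

end GeometricDecay

theorem abs_tsum_mul_sub_sum_range_le {a c : ℕ → ℝ} {B : ℝ} (ha : ∀ k, 0 ≤ a k)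
    (hs : Summable a) (hc : ∀ k, |c k| ≤ B) (m : ℕ) :
    |∑' k, a k * c k - ∑ k ∈ range m, a k * c k| ≤ B * ∑' k, a (k + m) := by
  have hbound : ∀ k, ‖a k * c k‖ ≤ B * a k := fun k ↦ by
    rw [Real.norm_eq_abs, abs_mul, abs_of_nonneg (ha k), mul_comm]
    exact mul_le_mul_of_nonneg_right (hc k) (ha k)
  have hac : Summable fun k ↦ a k * c k := (hs.mul_left B).of_norm_bounded hbound
  rw [← hac.sum_add_tsum_nat_add m, add_sub_cancel_left, ← tsum_mul_left]
  exact tsum_of_norm_bounded (((summable_nat_add_iff m).2 hs).mul_left B).hasSum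
    fun k ↦ hbound (k + m)

theorem volume_le_card_mul_of_subset_iUnion_closedBall {ι : Type*} [Fintype ι] {E : Set ℝ}
    (x : ι → ℝ) (r : ℝ) (h : E ⊆ ⋃ i, Metric.closedBall (x i) r) :
    volume E ≤ Fintype.card ι * ENNReal.ofReal (2 * r) :=
  calc volume E ≤ ∑ i, volume (Metric.closedBall (x i) r) :=
        (measure_mono h).trans (measure_iUnion_fintype_le _ _)
    _ = Fintype.card ι * ENNReal.ofReal (2 * r) := by
        simp [Real.volume_closedBall, Finset.card_univ]

theorem measure_eq_zero_of_le_ofReal_mul_pow {α : Type*} [MeasurableSpace α] {μ : Measure α}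
    {s : Set α} {C q : ℝ} (hq0 : 0 ≤ q) (hq1 : q < 1)
    (h : ∀ m : ℕ, μ s ≤ ENNReal.ofReal (C * q ^ m)) :
    μ s = 0 := by
  have hlim : Tendsto (fun m : ℕ ↦ ENNReal.ofReal (C * q ^ m)) atTop (nhds 0) := by
    simpa using ENNReal.tendsto_ofReal
      ((tendsto_pow_atTop_nhds_zero_of_lt_one hq0 hq1).const_mul C)
  exact nonpos_iff_eq_zero.1 (ge_of_tendsto' hlim h)

theorem volume_setOf_tsum_digits_le {a : ℕ → ℝ} (ha : ∀ k, 0 ≤ a k) (hs : Summable a)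
    (n m : ℕ) :
    volume {x : ℝ | ∃ u : ℕ → ℤ, (∀ k, |u k| ≤ (n : ℤ)) ∧ x = ∑' k, a k * (u k : ℝ)} ≤
      ((2 * n + 1) ^ m : ℕ) * ENNReal.ofReal (2 * (n * ∑' k, a (k + m))) := by
  have hcard : Fintype.card (Fin m → Icc (-(n : ℤ)) n) = (2 * n + 1) ^ m := by
    rw [Fintype.card_fun, Fintype.card_coe, Int.card_Icc, Fintype.card_fin]
    congr 1
    omega
  rw [← hcard]
  refine volume_le_card_mul_of_subset_iUnion_closedBall
    (fun v ↦ ∑ i : Fin m, a i * ((v i : ℤ) : ℝ)) _ ?_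
  rintro x ⟨u, hu, rfl⟩
  refine Set.mem_iUnion.2 ⟨fun i ↦ ⟨u i, mem_Icc.2 (abs_le.1 (hu i))⟩, ?_⟩
  rw [Metric.mem_closedBall, Real.dist_eq, Fin.sum_univ_eq_sum_range (fun k ↦ a k * (u k : ℝ))]
  exact abs_tsum_mul_sub_sum_range_le ha hs (fun k ↦ by exact_mod_cast hu k) m

theorem cantor_measure_zero_general (n : ℕ) (θ : ℝ) (hθ0 : 0 < θ)
    (hθ : θ < 1 / (2 * n + 1))
    (a : ℕ → ℝ) (ha : ∀ k, 0 < a k) (hd : ∀ k, a (k + 1) ≤ θ * a k) :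
    MeasureTheory.volume
      {x : ℝ | ∃ u : ℕ → ℤ, (∀ k, |u k| ≤ (n : ℤ)) ∧ x = ∑' k, a k * (u k : ℝ)} = 0 := by
  have ha0 : ∀ k, 0 ≤ a k := fun k ↦ (ha k).le
  have hq : (2 * n + 1) * θ < 1 := by rwa [lt_div_iff₀' (by positivity)] at hθ
  have hθ1 : θ < 1 := by nlinarith [(n.cast_nonneg : (0 : ℝ) ≤ n)]
  have hs : Summable a := summable_of_succ_le_mul ha0 hθ0.le hθ1 hd
  refine measure_eq_zero_of_le_ofReal_mul_pow (C := 2 * n * a 0 / (1 - θ)) (by positivity) hq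
    fun m ↦ (volume_setOf_tsum_digits_le ha0 hs n m).trans ?_
  rw [← ENNReal.ofReal_natCast, ← ENNReal.ofReal_mul (by positivity)]
  refine ENNReal.ofReal_le_ofReal ?_
  have htail := tsum_nat_add_le_div_of_succ_le_mul ha0 hθ0.le hθ1 hd m
  have ham : a m ≤ θ ^ m * a 0 := by simpa using le_pow_mul_of_succ_le_mul hθ0.le hd 0 m
  have h1θ : 0 < 1 - θ := by linarith
  calc ((2 * n + 1) ^ m : ℕ) * (2 * (n * ∑' k, a (k + m)))
      ≤ ((2 * n + 1) ^ m : ℕ) * (2 * (n * (θ ^ m * a 0 / (1 - θ)))) := by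
        gcongr
        exact htail.trans (div_le_div_of_nonneg_right ham h1θ.le)
    _ = 2 * n * a 0 / (1 - θ) * ((2 * n + 1) * θ) ^ m := by push_cast; rw [mul_pow]; ring

/-- With `n ≥ 1`, `0 < θ < 1/(2n+1)` and a positive sequence `a` with
`a (k+1) ≤ θ * a k`, the image of the map `u ↦ ∑ k, a k * u k`, defined on sequences
`u : ℕ → ℤ` with `|u k| ≤ n`, has Lebesgue measure zero. -/
theorem cantor_measure_zero (n : ℕ) (hn : 1 ≤ n) (θ : ℝ) (hθ0 : 0 < θ)
    (hθ : θ < 1 / (2 * n + 1))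
    (a : ℕ → ℝ) (ha : ∀ k, 0 < a k) (hd : ∀ k, a (k + 1) ≤ θ * a k) :
    MeasureTheory.volume
      {x : ℝ | ∃ u : ℕ → ℤ, (∀ k, |u k| ≤ (n : ℤ)) ∧ x = ∑' k, a k * (u k : ℝ)} = 0 :=
  cantor_measure_zero_general n θ hθ0 hθ a ha hd
end

section
/- Let E be a finite-dimensional real vector space and F ⊆ E a ℚ-vector subspace that is dense in E. For any x in E \ F and any neighborhood U of x, there exist finitely many vectors β₁,...,β_p in F ∩ U and positive reals λ₁,...,λ_p such that x = Σᵢ λᵢβᵢ, the family (β₁,...,β_p) is linearly independent over ℚ, and the family (λ₁,...,λ_p) is linearly independent over ℚ. -/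
/-!
Among all ways of writing `x = ∑ cᵢ βᵢ` with `βᵢ ∈ F` (such ways exist because the real span
of `F` is a closed subspace containing the dense set `F`), a shortest one has both families
`ℚ`-independent: a rational relation among the `βᵢ` lets one shift `c` so that some coefficient
vanishes, and a rational relation `∑ qᵢ cᵢ = 0` lets one replace each `βⱼ` by
`βⱼ - (qⱼ / q_{i₀}) β_{i₀} ∈ F`, which kills the vector `β_{i₀}`. Flipping signs makes the
coefficients positive.

To bring the vectors close to `x`, replace them by `γᵢ = d βᵢ + ∑ⱼ rⱼ βⱼ ∈ F` with rationals
`d ≈ 0` and `rⱼ ≈ λⱼ`. The matrix `d I + 𝟙 rᵀ` is rational and invertible, and the new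
coefficients `μ` are the image of `λ` under its inverse transpose, which is again a rank-one
perturbation of a multiple of the identity; so both families stay `ℚ`-independent, and `μ` is
positive as soon as `rⱼ < λⱼ` and `d > ∑ⱼ (λⱼ - rⱼ)`.
-/

open Finset Filter Topology

section RatIndependent

variable {V : Type*} [AddCommGroup V] [Module ℝ V] {ι : Type*} [Fintype ι]

/-- Linear independence over `ℚ` of a finite family in a real vector space (which carries no
`Module ℚ` instance, so `LinearIndependent ℚ` is not available). -/
def RatIndependent (v : ι → V) : Prop :=
  ∀ q : ι → ℚ, ∑ i, (q i : ℝ) • v i = 0 → q = 0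

theorem not_ratIndependent_iff {v : ι → V} :
    ¬RatIndependent v ↔ ∃ q : ι → ℚ, ∑ i, (q i : ℝ) • v i = 0 ∧ ∃ i₀, q i₀ ≠ 0 := by
  simp [RatIndependent, Function.ne_iff]

theorem RatIndependent.of_isEmpty [IsEmpty ι] (v : ι → V) : RatIndependent v :=
  fun _ _ => Subsingleton.elim _ _

theorem RatIndependent.ne_zero {v : ι → V} (hv : RatIndependent v) (i : ι) : v i ≠ 0 := by
  classical
  intro h
  have := congrFun (hv (Pi.single i 1) (by simp [Pi.single_apply, apply_ite, ite_smul, h])) i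
  simp at this

theorem RatIndependent.ratCast_smul {v : ι → V} (hv : RatIndependent v) {s : ι → ℚ}
    (hs : ∀ i, s i ≠ 0) : RatIndependent fun i => (s i : ℝ) • v i := by
  intro q hq
  have hqs := hv (q * s) (by simpa [smul_smul] using hq)
  funext i
  simpa [hs i] using congrFun hqs i

theorem sum_smul_smul_add_smul_sum (c u w : ι → ℝ) (a : ℝ) (v : ι → V) :
    ∑ i, c i • (a • v i + u i • ∑ j, w j • v j)
      = ∑ j, (a * c j + (∑ i, c i * u i) * w j) • v j := by
  simp only [smul_add, sum_add_distrib, smul_sum, smul_smul, add_smul, sum_mul, sum_smul]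
  rw [sum_comm (s := univ) (t := univ) (f := fun i j => (c i * (u i * w j)) • v j)]
  simp only [mul_assoc, mul_comm a]

/-- The matrix `a I + u wᵀ` is invertible when `a ≠ 0` and `a + wᵀ u ≠ 0`. -/
theorem RatIndependent.smul_add_smul_sum {v : ι → V} (hv : RatIndependent v) {a : ℚ}
    (u w : ι → ℚ) (ha : a ≠ 0) (hauw : a + ∑ i, w i * u i ≠ 0) :
    RatIndependent fun i => (a : ℝ) • v i + (u i : ℝ) • ∑ j, (w j : ℝ) • v j := by
  intro q hq
  set Q := ∑ i, q i * u i
  have hcoef : ∀ j, a * q j + Q * w j = 0 := by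
    refine congrFun (hv _ ?_)
    rw [sum_smul_smul_add_smul_sum] at hq
    simpa [Q] using hq
  have hQ : Q = 0 := by
    have : (a + ∑ i, w i * u i) * Q = ∑ j, (a * q j + Q * w j) * u j := by
      simp only [add_mul, sum_add_distrib, mul_assoc, ← mul_sum, Q]
      ring
    simpa [hcoef, hauw] using this
  funext j
  simpa [hQ, ha] using hcoef j

end RatIndependent

section Decomposition

variable {V : Type*} [AddCommGroup V] [Module ℝ V] {ι : Type*} [Fintype ι] {F : Set V}

structure IsRatSubspace (F : Set V) : Prop where
  zero_mem : (0 : V) ∈ F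
  add_mem : ∀ x ∈ F, ∀ y ∈ F, x + y ∈ F
  ratCast_smul_mem : ∀ (q : ℚ), ∀ x ∈ F, (q : ℝ) • x ∈ F

theorem IsRatSubspace.sum_ratCast_smul_mem (hF : IsRatSubspace F) (q : ι → ℚ) {v : ι → V}
    (hv : ∀ i, v i ∈ F) : ∑ i, (q i : ℝ) • v i ∈ F :=
  sum_induction _ (· ∈ F) (fun _ _ ha hb => hF.add_mem _ ha _ hb) hF.zero_mem
    fun i _ => hF.ratCast_smul_mem _ _ (hv i)

theorem IsRatSubspace.sub_ratCast_smul_mem (hF : IsRatSubspace F) {x y : V} (hx : x ∈ F)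
    (hy : y ∈ F) (q : ℚ) : x - (q : ℝ) • y ∈ F := by
  simpa [sub_eq_add_neg] using hF.add_mem _ hx _ (hF.ratCast_smul_mem (-q) _ hy)

def IsLinearCombination (F : Set V) (n : ℕ) (x : V) : Prop :=
  ∃ (β : Fin n → V) (c : Fin n → ℝ), (∀ i, β i ∈ F) ∧ ∑ i, c i • β i = x

theorem exists_isLinearCombination_of_mem_span {x : V} (hx : x ∈ Submodule.span ℝ F) :
    ∃ n, IsLinearCombination F n x := by
  obtain ⟨n, c, β, hx⟩ := Submodule.mem_span_set'.1 hx
  exact ⟨n, fun i => β i, c, fun i => (β i).2, hx⟩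

theorem isLinearCombination_of_smul_eq_zero {m : ℕ} {β : Fin (m + 1) → V}
    {c : Fin (m + 1) → ℝ} (hβ : ∀ i, β i ∈ F) (i₀ : Fin (m + 1)) (h₀ : c i₀ • β i₀ = 0) :
    IsLinearCombination F m (∑ i, c i • β i) :=
  ⟨β ∘ i₀.succAbove, c ∘ i₀.succAbove, fun _ => hβ _, by
    rw [Fin.sum_univ_succAbove _ i₀, h₀, zero_add]; rfl⟩

theorem isLinearCombination_of_not_ratIndependent_vectors {m : ℕ} {β : Fin (m + 1) → V}
    (c : Fin (m + 1) → ℝ) (hβ : ∀ i, β i ∈ F) (hdep : ¬RatIndependent β) :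
    IsLinearCombination F m (∑ i, c i • β i) := by
  obtain ⟨q, hq, i₀, hi₀⟩ := not_ratIndependent_iff.1 hdep
  set t := c i₀ / q i₀
  have hshift : ∑ i, c i • β i = ∑ i, (c i - t * q i) • β i := by
    simp [sub_smul, sum_sub_distrib, mul_smul, ← smul_sum, hq]
  rw [hshift]
  exact isLinearCombination_of_smul_eq_zero hβ i₀ (by simp [t, hi₀])

theorem isLinearCombination_of_not_ratIndependent_coeffs (hF : IsRatSubspace F) {m : ℕ}
    {β : Fin (m + 1) → V} {c : Fin (m + 1) → ℝ} (hβ : ∀ i, β i ∈ F)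
    (hdep : ¬RatIndependent c) : IsLinearCombination F m (∑ i, c i • β i) := by
  obtain ⟨q, hq, i₀, hi₀⟩ := not_ratIndependent_iff.1 hdep
  set β' := fun i => β i - ((q i / q i₀ : ℚ) : ℝ) • β i₀
  have hshift : ∑ i, c i • β i = ∑ i, c i • β' i := by
    have : ∑ i, c i * ((q i : ℝ) / q i₀) = 0 := by
      rw [← zero_div (q i₀ : ℝ), ← hq, sum_div]
      exact sum_congr rfl fun i _ => by rw [smul_eq_mul]; ring
    simp [β', smul_sub, sum_sub_distrib, smul_smul, ← sum_smul, this]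
  rw [hshift]
  exact isLinearCombination_of_smul_eq_zero
    (fun i => hF.sub_ratCast_smul_mem (hβ i) (hβ i₀) _) i₀ (by simp [β', hi₀])

theorem exists_ratIndependent_repr (hF : IsRatSubspace F) {x : V}
    (hx : ∃ n, IsLinearCombination F n x) :
    ∃ (p : ℕ) (β : Fin p → V) (c : Fin p → ℝ),
      (∀ i, β i ∈ F) ∧ ∑ i, c i • β i = x ∧ RatIndependent β ∧ RatIndependent c := by
  classical
  obtain ⟨p, ⟨β, c, hβ, rfl⟩, hmin⟩ :
      ∃ p, IsLinearCombination F p x ∧ ∀ m < p, ¬IsLinearCombination F m x :=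
    ⟨_, Nat.find_spec hx, fun _ => Nat.find_min hx⟩
  refine ⟨p, β, c, hβ, rfl, ?_⟩
  cases p with
  | zero => exact ⟨.of_isEmpty β, .of_isEmpty c⟩
  | succ m =>
    exact ⟨by_contra fun h => hmin m m.lt_succ_self
        (isLinearCombination_of_not_ratIndependent_vectors c hβ h),
      by_contra fun h => hmin m m.lt_succ_self
        (isLinearCombination_of_not_ratIndependent_coeffs hF hβ h)⟩

theorem exists_ratIndependent_pos_repr (hF : IsRatSubspace F) {x : V}
    (hx : ∃ n, IsLinearCombination F n x) :
    ∃ (p : ℕ) (β : Fin p → V) (lam : Fin p → ℝ), (∀ i, β i ∈ F) ∧ (∀ i, 0 < lam i) ∧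
      ∑ i, lam i • β i = x ∧ RatIndependent β ∧ RatIndependent lam := by
  obtain ⟨p, β, c, hβF, rfl, hβ, hc⟩ := exists_ratIndependent_repr hF hx
  set s : Fin p → ℚ := fun i => if 0 < c i then 1 else -1
  have hs : ∀ i, s i ≠ 0 := fun i => by by_cases h : 0 < c i <;> simp [s, h]
  have hsc : ∀ i, (s i : ℝ) * c i = |c i| := fun i => by
    by_cases h : 0 < c i
    · simp [s, h, abs_of_pos h]
    · simp [s, h, abs_of_nonpos (not_lt.1 h)]
  have hss : ∀ i, (s i : ℝ) * s i = 1 := fun i => by by_cases h : 0 < c i <;> simp [s, h]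
  refine ⟨p, fun i => (s i : ℝ) • β i, fun i => (s i : ℝ) • c i,
    fun i => hF.ratCast_smul_mem _ _ (hβF i), fun i => ?_, ?_,
    hβ.ratCast_smul hs, hc.ratCast_smul hs⟩
  · simpa [hsc] using hc.ne_zero i
  · refine sum_congr rfl fun i _ => ?_
    simp only [smul_smul, smul_eq_mul, mul_right_comm (s i : ℝ) (c i), hss, one_mul]

theorem exists_pos_ratIndependent_coeffs_shift {β : ι → V} {lam : ι → ℝ}
    (hβ : RatIndependent β) (hlam : RatIndependent lam) (hpos : ∀ i, 0 < lam i) {d : ℚ}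
    {r : ι → ℚ} (hd : 0 < d) (hr : ∀ i, (r i : ℝ) < lam i) (hdr : ∑ i, (lam i - r i) < d) :
    ∃ μ : ι → ℝ, (∀ i, 0 < μ i) ∧
      ∑ i, μ i • ((d : ℝ) • β i + ∑ j, (r j : ℝ) • β j) = ∑ i, lam i • β i ∧
      RatIndependent (fun i => (d : ℝ) • β i + ∑ j, (r j : ℝ) • β j) ∧ RatIndependent μ := by
  set c : ℚ := d + ∑ i, r i
  have hΛc : ∑ i, lam i < c := by
    push_cast [c]
    linarith [sum_sub_distrib (s := univ) lam (fun i => (r i : ℝ))]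
  have hΛ : 0 ≤ ∑ i, lam i := sum_nonneg fun i _ => (hpos i).le
  have hc : (0 : ℝ) < c := hΛ.trans_lt hΛc
  have hd' : (0 : ℝ) < d := by exact_mod_cast hd
  -- `s` will be `∑ i, μ i`
  set s := (∑ i, lam i) / c
  have hsr : ∀ i, s * r i < lam i := fun i => by
    rw [div_mul_eq_mul_div, div_lt_iff₀ hc]
    nlinarith [mul_le_mul_of_nonneg_left (hr i).le hΛ, mul_lt_mul_of_pos_right hΛc (hpos i)]
  have hsum : ∑ i, (lam i - s * r i) / d = s := by
    have hsc : s * c = ∑ i, lam i := div_mul_cancel₀ _ hc.ne'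
    push_cast [c] at hsc
    rw [← sum_div, sum_sub_distrib, ← mul_sum, div_eq_iff hd'.ne']
    linarith [mul_add s d (∑ i, (r i : ℝ))]
  refine ⟨fun i => (lam i - s * r i) / d, fun i => div_pos (sub_pos.2 (hsr i)) hd', ?_, ?_, ?_⟩
  · have := sum_smul_smul_add_smul_sum (fun i => (lam i - s * r i) / d) 1 (fun j => r j) d β
    simp only [Pi.one_apply, one_smul, mul_one, hsum] at this
    rw [this]
    refine sum_congr rfl fun i _ => ?_
    congr 1
    field_simp
    ring
  · simpa using hβ.smul_add_smul_sum 1 r hd.ne' (by simpa [c] using (Rat.cast_pos.1 hc).ne')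
  · have hc0 : (c : ℚ) ≠ 0 := by exact_mod_cast hc.ne'
    have key := hlam.smul_add_smul_sum r (fun _ => -(d * c)⁻¹) (inv_ne_zero hd.ne') (by
      rw [← mul_sum, show d⁻¹ + -(d * c)⁻¹ * ∑ i, r i = c⁻¹ by field_simp; ring]
      exact inv_ne_zero hc0)
    convert key using 2 with i
    simp only [s, smul_eq_mul, ← mul_sum]
    push_cast
    field_simp
    ring

theorem exists_rat_shift_mem_nhds [TopologicalSpace V] [ContinuousAdd V] [ContinuousSMul ℝ V]
    (β : ι → V) (lam : ι → ℝ) {U : Set V} (hU : U ∈ 𝓝 (∑ i, lam i • β i)) :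
    ∃ (d : ℚ) (r : ι → ℚ), 0 < d ∧ (∀ i, (r i : ℝ) < lam i) ∧ ∑ i, (lam i - r i) < d ∧
      ∀ i, (d : ℝ) • β i + ∑ j, (r j : ℝ) • β j ∈ U := by
  have hev : ∀ᶠ z : ℝ × (ι → ℝ) in 𝓝 (0, lam), ∀ i, z.1 • β i + ∑ j, z.2 j • β j ∈ U := by
    refine eventually_all.2 fun i => ?_
    have hcont : Continuous fun z : ℝ × (ι → ℝ) => z.1 • β i + ∑ j, z.2 j • β j := by
      fun_prop
    exact hcont.continuousAt.preimage_mem_nhds (by simpa using hU)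
  obtain ⟨η, hη, hball⟩ := Metric.eventually_nhds_iff.1 hev
  obtain ⟨d, hd, hdη⟩ := exists_rat_btwn hη
  set n : ℕ := Fintype.card ι
  have hgap : (0 : ℝ) < d / (n + 1) := by positivity
  choose r hr hrlam using fun j => exists_rat_btwn (sub_lt_self (lam j) hgap)
  refine ⟨d, r, by exact_mod_cast hd, hrlam, ?_,
    hball (y := ((d : ℝ), fun j => (r j : ℝ))) ?_⟩
  · calc ∑ i, (lam i - r i) ≤ ∑ _i : ι, (d : ℝ) / (n + 1) :=
          sum_le_sum fun i _ => by linarith [hr i]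
      _ = n * d / (n + 1) := by simp [n, mul_div_assoc]
      _ < d := by rw [div_lt_iff₀ (by positivity)]; linarith
  · rw [Prod.dist_eq, max_lt_iff, dist_pi_lt_iff hη]
    refine ⟨by rwa [dist_zero_right, Real.norm_of_nonneg hd.le], fun j => ?_⟩
    rw [Real.dist_eq, abs_lt]
    constructor <;>
      linarith [hr j, hrlam j, div_le_self hd.le (le_add_of_nonneg_left n.cast_nonneg)]

theorem exists_ratIndependent_pos_repr_mem_nhds [TopologicalSpace V] [ContinuousAdd V]
    [ContinuousSMul ℝ V] (hF : IsRatSubspace F) {x : V} (hx : x ∈ Submodule.span ℝ F)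
    {U : Set V} (hU : U ∈ 𝓝 x) :
    ∃ (p : ℕ) (γ : Fin p → V) (μ : Fin p → ℝ), (∀ i, γ i ∈ F ∩ U) ∧ (∀ i, 0 < μ i) ∧
      x = ∑ i, μ i • γ i ∧ RatIndependent γ ∧ RatIndependent μ := by
  obtain ⟨p, β, lam, hβF, hpos, rfl, hβ, hlam⟩ :=
    exists_ratIndependent_pos_repr hF (exists_isLinearCombination_of_mem_span hx)
  obtain ⟨d, r, hd, hr, hdr, hγU⟩ := exists_rat_shift_mem_nhds β lam hU
  obtain ⟨μ, hμ, hsum, hγ, hμI⟩ :=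
    exists_pos_ratIndependent_coeffs_shift hβ hlam hpos hd hr hdr
  refine ⟨p, _, μ, fun i => ⟨?_, hγU i⟩, hμ, hsum.symm, hγ, hμI⟩
  exact hF.add_mem _ (hF.ratCast_smul_mem _ _ (hβF i)) _ (hF.sum_ratCast_smul_mem r hβF)

end Decomposition

theorem rational_decomposition_general
    {E : Type*} [NormedAddCommGroup E] [NormedSpace ℝ E] [FiniteDimensional ℝ E]
    (F : Set E) (hF0 : (0 : E) ∈ F)
    (hFadd : ∀ x ∈ F, ∀ y ∈ F, x + y ∈ F)
    (hFsmul : ∀ (q : ℚ), ∀ x ∈ F, (q : ℝ) • x ∈ F)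
    (hFdense : Dense F)
    (x : E) (U : Set E) (hU : U ∈ nhds x) :
    ∃ (p : ℕ) (β : Fin p → E) (lam : Fin p → ℝ),
      (∀ i, β i ∈ F ∩ U) ∧ (∀ i, 0 < lam i) ∧
      x = ∑ i, lam i • β i ∧
      (∀ q : Fin p → ℚ, (∑ i, (q i : ℝ) • β i) = 0 → q = 0) ∧
      (∀ q : Fin p → ℚ, (∑ i, (q i : ℝ) * lam i) = 0 → q = 0) := by
  have hspan : x ∈ Submodule.span ℝ F :=
    (Submodule.closed_of_finiteDimensional _).closure_subset_iff.2 Submodule.subset_span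
      (hFdense x)
  exact exists_ratIndependent_pos_repr_mem_nhds ⟨hF0, hFadd, hFsmul⟩ hspan hU

/-- Let `E` be a finite-dimensional real vector space and `F ⊆ E` a
ℚ-vector subspace (closed under addition and rational scalar multiplication) that is
dense in `E`. For any `x ∈ E \ F` and any neighborhood `U` of `x`, there exist finitely
many vectors `β i ∈ F ∩ U` and positive reals `λ i` with `x = ∑ i, λ i • β i`, such that
the family `(β i)` is linearly independent over ℚ and the family `(λ i)` is linearly
independent over ℚ. -/
theorem rational_decomposition
    {E : Type*} [NormedAddCommGroup E] [NormedSpace ℝ E] [FiniteDimensional ℝ E]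
    (F : Set E) (hF0 : (0 : E) ∈ F)
    (hFadd : ∀ x ∈ F, ∀ y ∈ F, x + y ∈ F)
    (hFsmul : ∀ (q : ℚ), ∀ x ∈ F, (q : ℝ) • x ∈ F)
    (hFdense : Dense F)
    (x : E) (hx : x ∉ F) (U : Set E) (hU : U ∈ nhds x) :
    ∃ (p : ℕ) (β : Fin p → E) (lam : Fin p → ℝ),
      (∀ i, β i ∈ F ∩ U) ∧ (∀ i, 0 < lam i) ∧
      x = ∑ i, lam i • β i ∧
      (∀ q : Fin p → ℚ, (∑ i, (q i : ℝ) • β i) = 0 → q = 0) ∧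
      (∀ q : Fin p → ℚ, (∑ i, (q i : ℝ) * lam i) = 0 → q = 0) :=
  rational_decomposition_general F hF0 hFadd hFsmul hFdense x U hU
end

section
/- Let C be a nonempty convex cone in a finite-dimensional real vector space X. Then for every x in C there exists a unique open face of C containing x. -/
variable {X : Type*} [NormedAddCommGroup X] [NormedSpace ℝ X] [FiniteDimensional ℝ X]

/-- A convex cone: a set closed under addition and positive scalar multiplication. -/
def IsConvexCone (C : Set X) : Prop :=
  (∀ x ∈ C, ∀ y ∈ C, x + y ∈ C) ∧ (∀ c : ℝ, 0 < c → ∀ x ∈ C, c • x ∈ C)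

/-- `F` is open inside its linear span (with the subspace topology). -/
def OpenInSpan (F : Set X) : Prop :=
  IsOpen {v : Submodule.span ℝ F | (v : X) ∈ F}

/-- The basic properties of a candidate face of `C`: a nonempty convex subcone of `C`,
open in its linear span. -/
def FaceProp (C F : Set X) : Prop :=
  F.Nonempty ∧ F ⊆ C ∧ IsConvexCone F ∧ OpenInSpan F

/-- An open face of `C`: a nonempty convex subcone of `C`, open in its linear span,
and maximal among subsets of `C` with these properties. -/
def IsOpenFace (C F : Set X) : Prop :=
  FaceProp C F ∧ ∀ F' : Set X, FaceProp C F' → F ⊆ F' → F' = F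

namespace OpenFaceAux

/-- The candidate open face of `C` at `x`. -/
def faceAt (C : Set X) (x : X) : Set X :=
  {y | ∃ ε : ℝ, 0 < ε ∧ x - ε • y ∈ C ∧ y - ε • x ∈ C}

variable {C : Set X} {x : X}

lemma mono (hcone : IsConvexCone C) {b c : X} (hb : b ∈ C) {ε ε' : ℝ}
    (h : b - ε • c ∈ C) (h1 : 0 < ε') (h2 : ε' ≤ ε) : b - ε' • c ∈ C := by
  rcases eq_or_lt_of_le h2 with rfl | hlt
  · exact h
  have hε : 0 < ε := h1.trans hlt
  have key : b - ε' • c = (ε' / ε) • (b - ε • c) + (1 - ε' / ε) • b := by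
    match_scalars <;> field_simp <;> ring
  rw [key]
  exact hcone.1 _ (hcone.2 _ (by positivity) _ h) _
    (hcone.2 _ (by rw [sub_pos]; exact (div_lt_one hε).2 hlt) _ hb)

lemma absorb (hcone : IsConvexCone C) {b c : X} (hb : b ∈ C) (hc : c ∈ C) {δ : ℝ}
    (h : b - δ • c ∈ C) (hδ : 0 < δ) : ∀ t : ℝ, |t| < δ → b + t • c ∈ C := by
  intro t ht
  rcases lt_trichotomy t 0 with h0 | rfl | h0
  · have : b + t • c = b - (-t) • c := by module
    rw [this]
    exact mono hcone hb h (by linarith) (by rw [abs_of_neg h0] at ht; linarith)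
  · simpa using hb
  · exact hcone.1 _ hb _ (hcone.2 _ h0 _ hc)

lemma mem_C (hcone : IsConvexCone C) (hx : x ∈ C) {y : X} (hy : y ∈ faceAt C x) : y ∈ C := by
  obtain ⟨ε, hε, -, h2⟩ := hy
  have : y = (y - ε • x) + ε • x := by module
  rw [this]
  exact hcone.1 _ h2 _ (hcone.2 _ hε _ hx)

lemma self_mem (hcone : IsConvexCone C) (hx : x ∈ C) : x ∈ faceAt C x := by
  refine ⟨1/2, by norm_num, ?_, ?_⟩ <;>
  · have : x - (1/2 : ℝ) • x = (1/2 : ℝ) • x := by module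
    rw [this]
    exact hcone.2 _ (by norm_num) _ hx

/-- Mutual relation between two members of `faceAt C x`. -/
lemma rel (hcone : IsConvexCone C) {y a : X} (hy : y ∈ faceAt C x) (ha : a ∈ faceAt C x) :
    ∃ δ : ℝ, 0 < δ ∧ y - δ • a ∈ C ∧ a - δ • y ∈ C := by
  obtain ⟨ε₁, hε₁, hy1, hy2⟩ := hy
  obtain ⟨ε₂, hε₂, ha1, ha2⟩ := ha
  refine ⟨ε₁ * ε₂, by positivity, ?_, ?_⟩
  · have : y - (ε₁ * ε₂) • a = (y - ε₁ • x) + ε₁ • (x - ε₂ • a) := by module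
    rw [this]; exact hcone.1 _ hy2 _ (hcone.2 _ hε₁ _ ha1)
  · have : a - (ε₁ * ε₂) • y = (a - ε₂ • x) + ε₂ • (x - ε₁ • y) := by module
    rw [this]; exact hcone.1 _ ha2 _ (hcone.2 _ hε₂ _ hy1)

lemma isCone (hcone : IsConvexCone C) (hx : x ∈ C) : IsConvexCone (faceAt C x) := by
  constructor
  · rintro y₁ ⟨ε₁, hε₁, h11, h12⟩ y₂ ⟨ε₂, hε₂, h21, h22⟩
    have hy₁ : y₁ ∈ C := mem_C hcone hx ⟨ε₁, hε₁, h11, h12⟩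
    have hy₂ : y₂ ∈ C := mem_C hcone hx ⟨ε₂, hε₂, h21, h22⟩
    set ε := min ε₁ ε₂
    have hε : 0 < ε := lt_min hε₁ hε₂
    refine ⟨ε / 2, by positivity, ?_, ?_⟩
    · have e1 : x - ε₁ • y₁ ∈ C := h11
      have e1' : x - ε • y₁ ∈ C := mono hcone hx e1 hε (min_le_left _ _)
      have e2' : x - ε • y₂ ∈ C := mono hcone hx h21 hε (min_le_right _ _)
      have : x - (ε / 2) • (y₁ + y₂) = (1/2 : ℝ) • (x - ε • y₁) + (1/2 : ℝ) • (x - ε • y₂) := by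
        module
      rw [this]
      exact hcone.1 _ (hcone.2 _ (by norm_num) _ e1') _ (hcone.2 _ (by norm_num) _ e2')
    · have base : (y₁ + y₂) - ε₁ • x ∈ C := by
        have : (y₁ + y₂) - ε₁ • x = (y₁ - ε₁ • x) + y₂ := by module
        rw [this]; exact hcone.1 _ h12 _ hy₂
      exact mono hcone (hcone.1 _ hy₁ _ hy₂) base (by positivity)
        ((half_le_self hε.le).trans (min_le_left _ _))
  · rintro c hc y ⟨ε, hε, h1, h2⟩
    have hy : y ∈ C := mem_C hcone hx ⟨ε, hε, h1, h2⟩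
    set η := min (ε / c) (c * ε)
    have hη : 0 < η := lt_min (by positivity) (by positivity)
    refine ⟨η, hη, ?_, ?_⟩
    · have base : x - (ε / c) • (c • y) ∈ C := by
        have : x - (ε / c) • (c • y) = x - ε • y := by
          rw [smul_smul]; congr 1; field_simp
        rw [this]; exact h1
      exact mono hcone hx base hη (min_le_left _ _)
    · have base : c • y - (c * ε) • x ∈ C := by
        have : c • y - (c * ε) • x = c • (y - ε • x) := by module
        rw [this]; exact hcone.2 _ hc _ h2
      exact mono hcone (hcone.2 _ hc _ hy) base hη (min_le_right _ _)

lemma convex (hcone : IsConvexCone C) (hx : x ∈ C) : Convex ℝ (faceAt C x) := by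
  have hc := isCone hcone hx
  intro u hu v hv s t hs ht hst
  rcases hs.eq_or_lt with rfl | hs
  · rw [zero_add] at hst; subst hst; simpa using hv
  rcases ht.eq_or_lt with rfl | ht
  · rw [add_zero] at hst; subst hst; simpa using hu
  exact hc.1 _ (hc.2 _ hs _ hu) _ (hc.2 _ ht _ hv)

/-- The key extension lemma: `faceAt C x` is stable under small perturbations in
directions of its members. -/
lemma perturb (hcone : IsConvexCone C) (hx : x ∈ C) {y a : X}
    (hy : y ∈ faceAt C x) (ha : a ∈ faceAt C x) :
    ∃ t₀ : ℝ, 0 < t₀ ∧ ∀ t : ℝ, |t| < t₀ → y + t • a ∈ faceAt C x := by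
  obtain ⟨ε, hε, hxy, hyx⟩ := hy
  obtain ⟨ε₂, hε₂, hxa, hax⟩ := ha
  obtain ⟨δ, hδ, hya, -⟩ := rel hcone ⟨ε, hε, hxy, hyx⟩ ⟨ε₂, hε₂, hxa, hax⟩
  have hyC : y ∈ C := mem_C hcone hx ⟨ε, hε, hxy, hyx⟩
  have haC : a ∈ C := mem_C hcone hx ⟨ε₂, hε₂, hxa, hax⟩
  refine ⟨min (ε₂ / ε) (δ / 2), lt_min (by positivity) (by positivity), ?_⟩
  intro t ht
  have ht1 : |t| < ε₂ / ε := lt_of_lt_of_le ht (min_le_left _ _)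
  have ht2 : |t| < δ / 2 := lt_of_lt_of_le ht (min_le_right _ _)
  refine ⟨ε / 2, by positivity, ?_, ?_⟩
  · -- x - (ε/2) • (y + t • a) ∈ C
    have hz : (x - (ε/2) • y) - (ε₂/2) • a ∈ C := by
      have : (x - (ε/2) • y) - (ε₂/2) • a
          = (1/2 : ℝ) • (x - ε • y) + (1/2 : ℝ) • (x - ε₂ • a) := by module
      rw [this]
      exact hcone.1 _ (hcone.2 _ (by norm_num) _ hxy) _ (hcone.2 _ (by norm_num) _ hxa)
    have hzC : x - (ε/2) • y ∈ C := mono hcone hx hxy (by positivity) (by linarith)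
    have := absorb hcone hzC haC hz (by positivity) (-(ε/2) * t)
      (by rw [abs_mul, abs_neg, abs_of_pos (by positivity : (0:ℝ) < ε/2)]
          calc ε/2 * |t| < ε/2 * (ε₂/ε) := by
                exact mul_lt_mul_of_pos_left ht1 (by positivity)
               _ = ε₂/2 := by field_simp)
    have key : x - (ε/2) • (y + t • a) = (x - (ε/2) • y) + (-(ε/2) * t) • a := by module
    rw [key]; exact this
  · -- (y + t • a) - (ε/2) • x ∈ C
    have hw : (y - (ε/2) • x) - (δ/2) • a ∈ C := by
      have : (y - (ε/2) • x) - (δ/2) • a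
          = (1/2 : ℝ) • (y - ε • x) + (1/2 : ℝ) • (y - δ • a) := by module
      rw [this]
      exact hcone.1 _ (hcone.2 _ (by norm_num) _ hyx) _ (hcone.2 _ (by norm_num) _ hya)
    have hwC : y - (ε/2) • x ∈ C := mono hcone hyC hyx (by positivity) (by linarith)
    have := absorb hcone hwC haC hw (by positivity) t ht2
    have key : (y + t • a) - (ε/2) • x = (y - (ε/2) • x) + t • a := by module
    rw [key]; exact this

end OpenFaceAux

namespace OpenFaceAux

variable {C : Set X} {x : X}

lemma openInSpan (hcone : IsConvexCone C) (hx : x ∈ C) : OpenInSpan (faceAt C x) := by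
  set F := faceAt C x with hF
  rw [OpenInSpan, ← subset_interior_iff_isOpen]
  set V := Submodule.span ℝ F with hV
  set F' : Set V := {v : V | (v : X) ∈ F} with hF'
  have hconv' : Convex ℝ F' := by
    intro u hu v hv s t hs ht hst
    show ((s • u + t • v : V) : X) ∈ F
    push_cast
    exact convex hcone hx hu hv hs ht hst
  have hspan : Submodule.span ℝ F' = ⊤ := Submodule.span_span_coe_preimage
  have hne' : F'.Nonempty := ⟨⟨x, Submodule.subset_span (self_mem hcone hx)⟩,
    self_mem hcone hx⟩
  have hvs : vectorSpan ℝ F' = ⊤ := by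
    rw [eq_top_iff, ← hspan, Submodule.span_le]
    intro y hy
    have h2 : ((2 : ℝ) • y : V) ∈ F' := by
      show (((2 : ℝ) • y : V) : X) ∈ F
      push_cast
      exact (isCone hcone hx).2 2 (by norm_num) _ hy
    have hy' : y = ((2 : ℝ) • y : V) -ᵥ y := by
      show y = (2 : ℝ) • y - y; module
    rw [hy']
    exact Submodule.subset_span (Set.vsub_mem_vsub h2 hy)
  have htop : affineSpan ℝ F' = ⊤ :=
    (AffineSubspace.affineSpan_eq_top_iff_vectorSpan_eq_top_of_nonempty ℝ V V hne').2 hvs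
  obtain ⟨w, hw⟩ := (hconv'.interior_nonempty_iff_affineSpan_eq_top).2 htop
  intro z hz
  have hw' : w ∈ F' := interior_subset hw
  have hwF : (w : X) ∈ F := hw'
  obtain ⟨t₀, ht₀, hpert⟩ := perturb hcone hx hz hwF
  set s : ℝ := min (1/2) (t₀/2) with hs
  have hs0 : 0 < s := lt_min (by norm_num) (by positivity)
  have hs1 : s < 1 := lt_of_le_of_lt (min_le_left _ _) (by norm_num)
  have hzs : (z : X) - s • (w : X) ∈ F := by
    have := hpert (-s) (by
      rw [abs_neg, abs_of_pos hs0]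
      exact lt_of_le_of_lt (min_le_right _ _) (by linarith))
    simpa [sub_eq_add_neg, neg_smul] using this
  have hs' : (0:ℝ) < 1 - s := by linarith
  have hu : (1/(1-s)) • ((z : X) - s • (w : X)) ∈ F :=
    (isCone hcone hx).2 _ (one_div_pos.2 hs') _ hzs
  have huV : ((1/(1-s)) • (z - s • w) : V) ∈ F' := by
    show (((1/(1-s)) • (z - s • w) : V) : X) ∈ F
    push_cast
    exact hu
  have hcombo := hconv'.combo_interior_self_mem_interior hw huV hs0
    (by linarith : (0:ℝ) ≤ 1 - s) (by ring)
  have hs'' : (1:ℝ) - s ≠ 0 := ne_of_gt hs'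
  have hzeq : z = s • w + (1 - s) • ((1/(1-s)) • (z - s • w)) := by
    match_scalars <;> field_simp <;> ring
  rw [hzeq]
  exact hcombo

lemma key (hcone : IsConvexCone C) (hx : x ∈ C) {F' : Set X} (hFP : FaceProp C F')
    (hxF' : x ∈ F') : F' ⊆ faceAt C x := by
  obtain ⟨hne, hsub, hcone', hopen⟩ := hFP
  intro z hz
  set V' := Submodule.span ℝ F' with hV'
  have gen : ∀ a b : V', (a : X) ∈ F' → ∃ ε : ℝ, 0 < ε ∧ (a : X) - ε • (b : X) ∈ F' := by
    intro a b ha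
    have hcont : Continuous fun t : ℝ => a - t • b := by continuity
    have hop : IsOpen ((fun t : ℝ => a - t • b) ⁻¹' {v : V' | (v : X) ∈ F'}) :=
      hopen.preimage hcont
    have h0 : (0 : ℝ) ∈ (fun t : ℝ => a - t • b) ⁻¹' {v : V' | (v : X) ∈ F'} := by
      simpa using ha
    obtain ⟨δ, hδ, hball⟩ := Metric.isOpen_iff.1 hop 0 h0
    have hmem : (δ/2 : ℝ) ∈ Metric.ball (0 : ℝ) δ := by
      rw [Metric.mem_ball, Real.dist_eq, sub_zero, abs_of_pos (by positivity)]
      linarith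
    have := hball hmem
    refine ⟨δ/2, by positivity, ?_⟩
    simpa using this
  have hxV : x ∈ V' := Submodule.subset_span hxF'
  have hzV : z ∈ V' := Submodule.subset_span hz
  obtain ⟨ε₁, hε₁, h1⟩ := gen ⟨x, hxV⟩ ⟨z, hzV⟩ hxF'
  obtain ⟨ε₂, hε₂, h2⟩ := gen ⟨z, hzV⟩ ⟨x, hxV⟩ hz
  refine ⟨min ε₁ ε₂, lt_min hε₁ hε₂, ?_, ?_⟩
  · exact mono hcone (hsub hxF') (hsub h1) (lt_min hε₁ hε₂) (min_le_left _ _)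
  · exact mono hcone (hsub hz) (hsub h2) (lt_min hε₁ hε₂) (min_le_right _ _)

lemma faceProp (hcone : IsConvexCone C) (hx : x ∈ C) : FaceProp C (faceAt C x) :=
  ⟨⟨x, self_mem hcone hx⟩, fun _ hy => mem_C hcone hx hy, isCone hcone hx,
    openInSpan hcone hx⟩

end OpenFaceAux

/-- For a nonempty convex cone `C` in a finite-dimensional real vector
space, every point of `C` lies in a unique open face of `C`. -/
theorem exists_unique_open_face (C : Set X) (hC : C.Nonempty) (hcone : IsConvexCone C)
    (x : X) (hx : x ∈ C) :
    ∃! F : Set X, IsOpenFace C F ∧ x ∈ F := by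
  refine ⟨OpenFaceAux.faceAt C x, ⟨⟨OpenFaceAux.faceProp hcone hx, ?_⟩,
    OpenFaceAux.self_mem hcone hx⟩, ?_⟩
  · intro F' hFP hsubset
    exact Set.Subset.antisymm
      (OpenFaceAux.key hcone hx hFP (hsubset (OpenFaceAux.self_mem hcone hx)))
      hsubset
  · rintro G ⟨⟨hGP, hGmax⟩, hxG⟩
    exact (hGmax _ (OpenFaceAux.faceProp hcone hx)
      (OpenFaceAux.key hcone hx hGP hxG)).symm
end

section
/- Let C be a nonempty convex cone in a finite-dimensional real vector space X. Any two distinct open faces of C are disjoint. -/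
variable {X : Type*} [NormedAddCommGroup X] [NormedSpace ℝ X] [FiniteDimensional ℝ X]

set_option linter.unusedSectionVars false in
lemma sub_smul_mem_of_openInSpan {F : Set X} (hF : OpenInSpan F) {f x : X}
    (hf : f ∈ F) (hx : x ∈ Submodule.span ℝ F) : ∃ δ : ℝ, 0 < δ ∧ f - δ • x ∈ F := by
  have hfV : f ∈ Submodule.span ℝ F := Submodule.subset_span hf
  set g : ℝ → Submodule.span ℝ F := fun δ => ⟨f, hfV⟩ - δ • ⟨x, hx⟩ with hg
  have hgc : Continuous g := by
    apply Continuous.sub continuous_const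
    exact continuous_id.smul continuous_const
  have h0 : g 0 ∈ {v : Submodule.span ℝ F | (v : X) ∈ F} := by simp [hg, hf]
  obtain ⟨ε, εpos, hε⟩ := Metric.isOpen_iff.mp (hF.preimage hgc) 0 h0
  refine ⟨ε / 2, by positivity, ?_⟩
  have : g (ε / 2) ∈ {v : Submodule.span ℝ F | (v : X) ∈ F} := by
    apply hε
    simp [Real.dist_eq, abs_of_pos, εpos]
  simpa [hg] using this


/-- Two distinct open faces of a nonempty convex cone are disjoint. -/
theorem open_faces_disjoint (C : Set X) (hC : C.Nonempty) (hcone : IsConvexCone C)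
    (F₁ F₂ : Set X) (h₁ : IsOpenFace C F₁) (h₂ : IsOpenFace C F₂) (hne : F₁ ≠ F₂) :
    Disjoint F₁ F₂ := by
  rw [Set.disjoint_left]
  intro x hx1 hx2
  obtain ⟨⟨hne₁, hsub₁, hcone₁, hopen₁⟩, hmax₁⟩ := h₁
  obtain ⟨⟨hne₂, hsub₂, hcone₂, hopen₂⟩, hmax₂⟩ := h₂
  set V₁ := Submodule.span ℝ F₁ with hV₁
  set V₂ := Submodule.span ℝ F₂ with hV₂
  set S : Set X := {z | ∃ f ∈ F₁, ∃ g ∈ F₂, f + g = z} with hS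
  -- F₁ ⊆ S
  have hF₁S : F₁ ⊆ S := by
    intro f hf
    obtain ⟨δ, δpos, hδ⟩ := sub_smul_mem_of_openInSpan hopen₁ hf (Submodule.subset_span hx1)
    exact ⟨f - δ • x, hδ, δ • x, hcone₂.2 δ δpos x hx2, by abel⟩
  have hF₂S : F₂ ⊆ S := by
    intro g hg
    obtain ⟨δ, δpos, hδ⟩ := sub_smul_mem_of_openInSpan hopen₂ hg (Submodule.subset_span hx2)
    exact ⟨δ • x, hcone₁.2 δ δpos x hx1, g - δ • x, hδ, by abel⟩
  -- span of S
  have hspan : Submodule.span ℝ S = V₁ ⊔ V₂ := by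
    apply le_antisymm
    · rw [Submodule.span_le]
      rintro z ⟨f, hf, g, hg, rfl⟩
      exact Submodule.add_mem_sup (Submodule.subset_span hf) (Submodule.subset_span hg)
    · exact sup_le (Submodule.span_mono hF₁S) (Submodule.span_mono hF₂S)
  -- S is open in its span
  have hopenS : OpenInSpan S := by
    unfold OpenInSpan
    rw [hspan]
    -- the addition map
    have hmem : ∀ p : V₁ × V₂, (V₁.subtype.coprod V₂.subtype) p ∈ V₁ ⊔ V₂ := by
      rintro ⟨a, b⟩
      exact Submodule.add_mem_sup a.2 b.2
    set ψ : V₁ × V₂ →ₗ[ℝ] (V₁ ⊔ V₂ : Submodule ℝ X) :=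
      (V₁.subtype.coprod V₂.subtype).codRestrict _ hmem with hψ
    set Φ : V₁ × V₂ →L[ℝ] (V₁ ⊔ V₂ : Submodule ℝ X) := ψ.toContinuousLinearMap with hΦ
    have hsurj : Function.Surjective Φ := by
      rintro ⟨w, hw⟩
      obtain ⟨a, ha, b, hb, rfl⟩ := Submodule.mem_sup.mp hw
      exact ⟨(⟨a, ha⟩, ⟨b, hb⟩), rfl⟩
    have hopenmap : IsOpenMap Φ := Φ.isOpenMap hsurj
    have himg : {v : (V₁ ⊔ V₂ : Submodule ℝ X) | (v : X) ∈ S} =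
        Φ '' (({v : V₁ | (v : X) ∈ F₁}) ×ˢ ({v : V₂ | (v : X) ∈ F₂})) := by
      ext v
      constructor
      · rintro ⟨f, hf, g, hg, hfg⟩
        refine ⟨(⟨f, Submodule.subset_span hf⟩, ⟨g, Submodule.subset_span hg⟩), ⟨hf, hg⟩, ?_⟩
        exact Subtype.ext hfg
      · rintro ⟨⟨a, b⟩, ⟨ha, hb⟩, rfl⟩
        exact ⟨a, ha, b, hb, rfl⟩
    rw [himg]
    exact hopenmap _ (hopen₁.prod hopen₂)
  -- S is a face candidate
  have hSface : FaceProp C S := by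
    refine ⟨⟨x, hF₁S hx1⟩, ?_, ⟨?_, ?_⟩, hopenS⟩
    · rintro z ⟨f, hf, g, hg, rfl⟩
      exact hcone.1 f (hsub₁ hf) g (hsub₂ hg)
    · rintro a ⟨f, hf, g, hg, rfl⟩ b ⟨f', hf', g', hg', rfl⟩
      exact ⟨f + f', hcone₁.1 f hf f' hf', g + g', hcone₂.1 g hg g' hg', by abel⟩
    · rintro c hc z ⟨f, hf, g, hg, rfl⟩
      exact ⟨c • f, hcone₁.2 c hc f hf, c • g, hcone₂.2 c hc g hg, by rw [smul_add]⟩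
  have e₁ : S = F₁ := hmax₁ S hSface hF₁S
  have e₂ : S = F₂ := hmax₂ S hSface hF₂S
  exact hne (e₁ ▸ e₂)
end

section
/- Let C be a nonempty convex cone in a finite-dimensional real vector space X, let F be an open face of C, and let y ∈ ∂F ∩ C (the topological boundary of F intersected with C). Then the unique open face F_y of C containing y is contained in ∂F. -/
/-!
Let `z ∈ F_y`. Since `F_y` is open in its span, `w = y - t • (z - y)` lies in `F_y` for some
`t > 0`, so `y` lies in the open segment `(z, w)` and `w + t • z = (1 + t) • y ∈ span F`.
Then `F + ℝ_{>0} w + ℝ_{>0} z` is a convex subcone of `C` which is open in its span (it is the image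
of an open set under a linear surjection onto that span) and contains `F`; by maximality it equals
`F`, whence `w, z ∈ closure F`. If `z` were interior to `F`, so would be every point of the open
segment `(z, w)`, in particular `y`, contradicting `y ∈ ∂F`.
-/

variable {X : Type*} [NormedAddCommGroup X] [NormedSpace ℝ X] [FiniteDimensional ℝ X]

open Filter Topology Submodule

section

variable {E : Type*} [NormedAddCommGroup E] [NormedSpace ℝ E]

lemma IsConvexCone.convex {F : Set E} (h : IsConvexCone F) : Convex ℝ F := by
  intro x hx y hy a b ha hb hab
  rcases ha.eq_or_lt with rfl | ha
  · simpa [show b = 1 by linarith] using hy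
  rcases hb.eq_or_lt with rfl | hb
  · simpa [show a = 1 by linarith] using hx
  exact h.1 _ (h.2 a ha x hx) _ (h.2 b hb y hy)

lemma IsConvexCone.image {W : Type*} [NormedAddCommGroup W] [NormedSpace ℝ W] {U : Set W}
    (hU : IsConvexCone U) (T : W →ₗ[ℝ] E) : IsConvexCone (T '' U) := by
  constructor
  · rintro _ ⟨a, ha, rfl⟩ _ ⟨b, hb, rfl⟩
    exact ⟨a + b, hU.1 a ha b hb, map_add T a b⟩
  · rintro c hc _ ⟨a, ha, rfl⟩
    exact ⟨c • a, hU.2 c hc a ha, map_smul T c a⟩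

lemma OpenInSpan.eventually_add_smul_mem {F : Set E} (hF : OpenInSpan F) {f u : E}
    (hf : f ∈ F) (hu : u ∈ span ℝ F) : ∀ᶠ τ in 𝓝 (0 : ℝ), f + τ • u ∈ F := by
  let γ : ℝ → span ℝ F := fun τ => ⟨f + τ • u, add_mem (subset_span hf) (smul_mem _ τ hu)⟩
  have hγ : Continuous γ := by fun_prop
  exact hγ.continuousAt.preimage_mem_nhds (hF.mem_nhds (by simpa [γ] using hf))

lemma OpenInSpan.exists_pos_sub_smul_mem {F : Set E} (hF : OpenInSpan F) {f u : E}
    (hf : f ∈ F) (hu : u ∈ span ℝ F) : ∃ τ > (0 : ℝ), f - τ • u ∈ F := by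
  have h : ∀ᶠ τ in 𝓝[>] (0 : ℝ), f + τ • -u ∈ F :=
    nhdsWithin_le_nhds (hF.eventually_add_smul_mem hf (neg_mem hu))
  obtain ⟨τ, hmem, hτ⟩ := (h.and self_mem_nhdsWithin).exists
  exact ⟨τ, hτ, by simpa [sub_eq_add_neg] using hmem⟩

lemma openInSpan_image_of_isOpen {W : Type*} [NormedAddCommGroup W] [NormedSpace ℝ W]
    [FiniteDimensional ℝ W] (T : W →ₗ[ℝ] E) {U : Set W} (hU : IsOpen U) (hne : U.Nonempty) :
    OpenInSpan (T '' U) := by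
  have hspan : span ℝ (T '' U) = LinearMap.range T := by
    rw [span_image, (span ℝ U).eq_top_of_nonempty_interior'
      (hne.mono (hU.subset_interior_iff.mpr subset_span)), Submodule.map_top]
  let T' : W →ₗ[ℝ] span ℝ (T '' U) :=
    T.codRestrict _ fun x => hspan ▸ LinearMap.mem_range_self T x
  have hT' : Function.Surjective T' := by
    rintro ⟨v, hv⟩
    obtain ⟨x, rfl⟩ := LinearMap.mem_range.mp (hspan ▸ hv)
    exact ⟨x, rfl⟩
  have himage : {v : span ℝ (T '' U) | (v : E) ∈ T '' U} = T' '' U := by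
    ext v
    constructor
    · rintro ⟨x, hx, hxv⟩
      exact ⟨x, hx, Subtype.ext hxv⟩
    · rintro ⟨x, hx, rfl⟩
      exact ⟨x, hx, rfl⟩
  have : FiniteDimensional ℝ (span ℝ (T '' U)) := hspan ▸ inferInstance
  unfold OpenInSpan
  rw [himage]
  exact T'.isOpenMap_of_finiteDimensional hT' U hU

lemma mem_closure_of_forall_pos_add_smul_mem {s : Set E} {w v : E}
    (h : ∀ ε : ℝ, 0 < ε → w + ε • v ∈ s) : w ∈ closure s := by
  have hlim : Tendsto (fun ε : ℝ => w + ε • v) (𝓝[>] 0) (𝓝 w) :=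
    tendsto_nhdsWithin_of_tendsto_nhds (by
      simpa using ((tendsto_id (x := 𝓝 (0 : ℝ))).smul_const v).const_add w)
  exact mem_closure_of_tendsto hlim (eventually_nhdsWithin_of_forall h)

lemma IsOpenFace.mem_closure_of_smul_add_smul_mem_span [FiniteDimensional ℝ E] {C F : Set E}
    (hcone : IsConvexCone C) (hF : IsOpenFace C F) {w z : E} (hw : w ∈ C) (hz : z ∈ C)
    {c₁ c₂ : ℝ} (hc₁ : 0 < c₁) (hc₂ : 0 < c₂) (hcomb : c₁ • w + c₂ • z ∈ span ℝ F) :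
    w ∈ closure F := by
  obtain ⟨⟨⟨f₀, hf₀⟩, hFC, hFcone, hFopen⟩, hFmax⟩ := hF
  let V := span ℝ F
  let T : V × ℝ × ℝ →ₗ[ℝ] E := V.subtype.coprod
    ((LinearMap.toSpanSingleton ℝ E w).coprod (LinearMap.toSpanSingleton ℝ E z))
  have hT : ∀ q, T q = q.1 + (q.2.1 • w + q.2.2 • z) := fun q => by simp [T]
  let U : Set (V × ℝ × ℝ) := {q | ↑q.1 ∈ F ∧ 0 < q.2.1 ∧ 0 < q.2.2}
  have hUopen : IsOpen U :=
    (hFopen.preimage continuous_fst).inter <|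
      (isOpen_lt continuous_const continuous_snd.fst).inter
        (isOpen_lt continuous_const continuous_snd.snd)
  have hUcone : IsConvexCone U := by
    constructor
    · rintro p ⟨hp, hp₁, hp₂⟩ q ⟨hq, hq₁, hq₂⟩
      exact ⟨hFcone.1 _ hp _ hq, add_pos hp₁ hq₁, add_pos hp₂ hq₂⟩
    · rintro c hc q ⟨hq, hq₁, hq₂⟩
      exact ⟨hFcone.2 c hc _ hq, mul_pos hc hq₁, mul_pos hc hq₂⟩
  -- `f = (f - τ • (c₁ • w + c₂ • z)) + τ c₁ • w + τ c₂ • z`, admissible for small `τ > 0`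
  have hFT : F ⊆ T '' U := by
    intro f hf
    obtain ⟨τ, hτ, hfτ⟩ := hFopen.exists_pos_sub_smul_mem hf hcomb
    refine ⟨(⟨_, sub_mem (subset_span hf) (smul_mem _ τ hcomb)⟩, τ * c₁, τ * c₂),
      ⟨hfτ, mul_pos hτ hc₁, mul_pos hτ hc₂⟩, ?_⟩
    rw [hT]
    module
  have hTC : T '' U ⊆ C := by
    rintro _ ⟨q, ⟨hq, hq₁, hq₂⟩, rfl⟩
    rw [hT]
    exact hcone.1 _ (hFC hq) _ (hcone.1 _ (hcone.2 _ hq₁ w hw) _ (hcone.2 _ hq₂ z hz))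
  have hne : U.Nonempty := ⟨(⟨f₀, subset_span hf₀⟩, 1, 1), hf₀, one_pos, one_pos⟩
  have hFeq : T '' U = F := hFmax _
    ⟨hne.image T, hTC, hUcone.image T, openInSpan_image_of_isOpen T hUopen hne⟩ hFT
  refine mem_closure_of_forall_pos_add_smul_mem (v := f₀ + z) fun ε hε => hFeq ▸ ?_
  refine ⟨(⟨ε • f₀, smul_mem _ ε (subset_span hf₀)⟩, 1, ε), ⟨hFcone.2 ε hε f₀ hf₀, one_pos, hε⟩, ?_⟩
  rw [hT]
  module

end

theorem open_face_of_boundary_point_general (C : Set X)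
    (hcone : IsConvexCone C) (F : Set X) (hF : IsOpenFace C F)
    (y : X) (hy : y ∈ frontier F ∩ C)
    (Fy : Set X) (hFy : IsOpenFace C Fy) (hyFy : y ∈ Fy) :
    Fy ⊆ frontier F := by
  intro z hz
  have hyF : y ∈ span ℝ F := closure_minimal subset_span
    (span ℝ F).closed_of_finiteDimensional (frontier_subset_closure hy.1)
  obtain ⟨t, ht, hw⟩ := hFy.1.2.2.2.exists_pos_sub_smul_mem hyFy
    (sub_mem (subset_span hz) (subset_span hyFy))
  set w := y - t • (z - y)
  have hwz : w + t • z = (1 + t) • y := by module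
  have hwzF : (1 : ℝ) • w + t • z ∈ span ℝ F := by
    rw [one_smul, hwz]
    exact smul_mem _ _ hyF
  have hwC : w ∈ C := hFy.1.2.1 hw
  have hzC : z ∈ C := hFy.1.2.1 hz
  have hwF : w ∈ closure F :=
    hF.mem_closure_of_smul_add_smul_mem_span hcone hwC hzC one_pos ht hwzF
  have hzF : z ∈ closure F :=
    hF.mem_closure_of_smul_add_smul_mem_span hcone hzC hwC ht one_pos (by rwa [add_comm] at hwzF)
  refine ⟨hzF, fun hzI => hy.1.2 ?_⟩
  have hseg : y ∈ openSegment ℝ z w :=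
    ⟨t / (1 + t), 1 / (1 + t), by positivity, by positivity, by field_simp; ring, by
      rw [div_eq_inv_mul, div_eq_inv_mul, mul_smul, mul_smul, ← smul_add, one_smul,
        add_comm (t • z), hwz, inv_smul_smul₀ (by positivity)]⟩
  exact hF.1.2.2.1.convex.openSegment_interior_closure_subset_interior hzI hwF hseg

/-- If `F` is an open face of a nonempty convex cone `C` and
`y ∈ ∂F ∩ C`, then any open face of `C` containing `y` (in particular the unique one,
`F_y`) is contained in the topological boundary `∂F`. -/
theorem open_face_of_boundary_point (C : Set X) (hC : C.Nonempty)
    (hcone : IsConvexCone C) (F : Set X) (hF : IsOpenFace C F)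
    (y : X) (hy : y ∈ frontier F ∩ C)
    (Fy : Set X) (hFy : IsOpenFace C Fy) (hyFy : y ∈ Fy) :
    Fy ⊆ frontier F :=
  open_face_of_boundary_point_general C hcone F hF y hy Fy hFy hyFy
end

section
/- Let M be a compact metric space and φ a continuous flow on M. The quotient Rec* of the chain-recurrent set Rec by the equivalence relation (x ⇝ y and y ⇝ x), equipped with the quotient topology, is compact and totally disconnected. -/
/-!
Write `a ⇝ε b` (`ChainReach φ T ε a b`) when some `ε`-pseudo-orbit runs from `a` to `b` and its
last flow segment has length in `[T, 2T]`; every `ε`-pseudo-orbit can be brought to this form.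
Since the flow is uniformly equicontinuous over times in `[T, 2T]` and `[-2T, -T]`, a
chain-recurrent point `y` reaches, and is reached from, every point `δ`-close to it, with `δ`
depending only on `ε`: reroute the last jump, resp. the first flow segment, of a pseudo-orbit from
`y` to itself. This makes `Rec` closed, so `Rec` and `Rec*` are compact. It also makes the set of
chain-recurrent points `y` with `a ⇝ε y` clopen in `Rec`; this set is a union of classes, so it
descends to a clopen subset of `Rec*`. When `a ⇝̸ b`, it contains `a` but, for a suitable `ε`,
not `b`, so `Rec*` is totally separated.
-/

/-- Combinatorial data of a pseudo-orbit: points `x i` and flow durations `t i`;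
the pseudo-orbit follows the flow from `x i` for time `t i` and then jumps to `x (i+1)`. -/
structure PreChain (M : Type*) where
  n : ℕ
  x : Fin (n + 1) → M
  t : Fin (n + 1) → ℝ

namespace PreChain

variable {M : Type*} [MetricSpace M]

/-- `γ` is an `(ε,T)`-pseudo-orbit for the flow `φ`: each flow segment lasts at least
`T` and each jump has size `< ε`. -/
def IsChain (φ : Flow ℝ M) (T ε : ℝ) (γ : PreChain M) : Prop :=
  (∀ i, T ≤ γ.t i) ∧
  ∀ i : Fin γ.n, dist (φ (γ.t i.castSucc) (γ.x i.castSucc)) (γ.x i.succ) < ε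

/-- The starting point of a pseudo-orbit. -/
def first (γ : PreChain M) : M := γ.x 0

/-- The final point of a pseudo-orbit (the endpoint of the last flow segment). -/
def lastPoint (φ : Flow ℝ M) (γ : PreChain M) : M :=
  φ (γ.t (Fin.last γ.n)) (γ.x (Fin.last γ.n))

/-- A periodic `(ε,T)`-pseudo-orbit: the final jump back to the start has size `< ε`. -/
def IsPeriodic (φ : Flow ℝ M) (T ε : ℝ) (γ : PreChain M) : Prop :=
  γ.IsChain φ T ε ∧ dist (γ.lastPoint φ) γ.first < ε

/-- The total length (duration) of a pseudo-orbit. -/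
def len (γ : PreChain M) : ℝ := ∑ i, γ.t i

/-- The pseudo-orbit passes through the point `p`. -/
def Through (γ : PreChain M) (p : M) : Prop := ∃ i, γ.x i = p

end PreChain

/-- Chain reachability `a ⇝ b`: for every `ε > 0` there is an `(ε,T)`-pseudo-orbit
from `a` to `b`. -/
def ChainTo {M : Type*} [MetricSpace M] (φ : Flow ℝ M) (T : ℝ) (a b : M) : Prop :=
  ∀ ε > 0, ∃ γ : PreChain M, γ.IsChain φ T ε ∧ γ.first = a ∧ γ.lastPoint φ = b

/-- The chain-recurrent set of the flow `φ`. -/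
def ChainRec {M : Type*} [MetricSpace M] (φ : Flow ℝ M) (T : ℝ) : Set M :=
  {x | ChainTo φ T x x}

/-- The mutual chain-reachability relation on the chain-recurrent set. -/
def RecRel {M : Type*} [MetricSpace M] (φ : Flow ℝ M) (T : ℝ) :
    ↥(ChainRec φ T) → ↥(ChainRec φ T) → Prop :=
  fun a b => ChainTo φ T (a : M) (b : M) ∧ ChainTo φ T (b : M) (a : M)

open Relation Set

section ChainReach

variable {M : Type*} [MetricSpace M]

def ChainStep (φ : Flow ℝ M) (T ε : ℝ) (u v : M) : Prop :=
  ∃ t, T ≤ t ∧ dist (φ t u) v < ε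

def ChainReach (φ : Flow ℝ M) (T ε : ℝ) (a b : M) : Prop :=
  ∃ z, ReflTransGen (ChainStep φ T ε) a z ∧ ∃ t ∈ Icc T (2 * T), φ t z = b

variable {φ : Flow ℝ M} {T ε : ℝ}

theorem chainStep_mono : Monotone (ChainStep φ T) :=
  fun _ _ h _ _ ⟨t, ht, hd⟩ => ⟨t, ht, hd.trans_le h⟩

theorem chainStep_of_map_eq (hε : 0 < ε) {t : ℝ} (ht : T ≤ t) {u v : M} (h : φ t u = v) :
    ChainStep φ T ε u v :=
  ⟨t, ht, by rwa [h, dist_self]⟩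

theorem ChainReach.trans_of_dist_lt {a p q c : M} (h₁ : ChainReach φ T ε a p)
    (h₂ : ChainReach φ T ε q c) (hpq : dist p q < ε) : ChainReach φ T ε a c := by
  obtain ⟨z₁, P₁, t₁, ht₁, rfl⟩ := h₁
  obtain ⟨z₂, P₂, h₂⟩ := h₂
  exact ⟨z₂, P₁.trans (P₂.head ⟨t₁, ht₁.1, hpq⟩), h₂⟩

theorem ChainReach.trans {a b c : M} (h₁ : ChainReach φ T ε a b) (h₂ : ChainReach φ T ε b c)
    (hε : 0 < ε) : ChainReach φ T ε a c :=
  h₁.trans_of_dist_lt h₂ (by rwa [dist_self])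

theorem ChainReach.exists_transGen {a b c : M} (h₁ : ChainReach φ T ε a b)
    (h₂ : ChainReach φ T ε b c) (hε : 0 < ε) :
    ∃ z, TransGen (ChainStep φ T ε) a z ∧ ∃ r ∈ Icc T (2 * T), φ r z = c := by
  obtain ⟨z₁, P₁, t₁, ht₁, hz₁⟩ := h₁
  obtain ⟨z₂, P₂, h₂⟩ := h₂
  exact ⟨z₂, TransGen.trans_right P₁ (.head' (chainStep_of_map_eq hε ht₁.1 hz₁) P₂), h₂⟩

theorem chainReach_of_reflTransGen (hT : 0 < T) (hε : 0 < ε) {a z b : M} {t : ℝ}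
    (P : ReflTransGen (ChainStep φ T ε) a z) (ht : T ≤ t) (hz : φ t z = b) :
    ChainReach φ T ε a b := by
  rcases le_or_gt t (2 * T) with h | h
  · exact ⟨z, P, t, ⟨ht, h⟩, hz⟩
  · refine ⟨φ (t - T) z, P.tail (chainStep_of_map_eq hε (by linarith) rfl), T,
      ⟨le_rfl, by linarith⟩, ?_⟩
    rw [← φ.map_add, add_sub_cancel, hz]

theorem ChainStep.exists_mem_Icc (hT : 0 < T) (hε : 0 < ε) {u v : M}
    (h : ChainStep φ T ε u v) :
    ∃ s ∈ Icc T (2 * T), ∃ w, dist (φ s u) w < ε ∧ ReflTransGen (ChainStep φ T ε) w v := by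
  obtain ⟨t, ht, hd⟩ := h
  rcases le_or_gt t (2 * T) with h | h
  · exact ⟨t, ⟨ht, h⟩, v, hd, .refl⟩
  · refine ⟨T, ⟨le_rfl, by linarith⟩, φ T u, by rwa [dist_self], .single ⟨t - T, by linarith, ?_⟩⟩
    rwa [← φ.map_add, sub_add_cancel]

theorem PreChain.IsChain.reflTransGen {γ : PreChain M} (h : γ.IsChain φ T ε) :
    ReflTransGen (ChainStep φ T ε) γ.first (γ.x (Fin.last γ.n)) := by
  suffices ∀ i, ReflTransGen (ChainStep φ T ε) γ.first (γ.x i) from this _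
  intro i
  induction i using Fin.induction with
  | zero => exact .refl
  | succ j ih => exact ih.tail ⟨_, h.1 _, h.2 j⟩

theorem exists_isChain_of_reflTransGen {a z : M} (h : ReflTransGen (ChainStep φ T ε) a z)
    {t : ℝ} (ht : T ≤ t) :
    ∃ γ : PreChain M, γ.IsChain φ T ε ∧ γ.first = a ∧ γ.lastPoint φ = φ t z := by
  induction h generalizing t with
  | refl => exact ⟨⟨0, fun _ => a, fun _ => t⟩, ⟨fun _ => ht, fun i => i.elim0⟩, rfl, rfl⟩
  | @tail b c _ hbc ih =>
    obtain ⟨s, hs, hd⟩ := hbc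
    obtain ⟨γ, ⟨hγt, hγj⟩, hfirst, hlast⟩ := ih hs
    refine ⟨⟨γ.n + 1, Fin.snoc γ.x c, Fin.snoc γ.t t⟩, ⟨fun i => ?_, fun i => ?_⟩, ?_, ?_⟩
    · induction i using Fin.lastCases with
      | last => simpa using ht
      | cast j => simpa using hγt j
    · induction i using Fin.lastCases with
      | last =>
        rw [← hlast] at hd
        simpa [PreChain.lastPoint] using hd
      | cast j => simpa only [Fin.succ_castSucc, Fin.snoc_castSucc] using hγj j
    · change (Fin.snoc γ.x c : Fin (γ.n + 2) → M) (Fin.castSucc 0) = a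
      rw [Fin.snoc_castSucc]
      exact hfirst
    · simp [PreChain.lastPoint]

theorem chainTo_iff_forall_chainReach (hT : 0 < T) {a b : M} :
    ChainTo φ T a b ↔ ∀ ε > 0, ChainReach φ T ε a b := by
  refine ⟨fun h ε hε => ?_, fun h ε hε => ?_⟩
  · obtain ⟨γ, hγ, rfl, rfl⟩ := h ε hε
    exact chainReach_of_reflTransGen hT hε hγ.reflTransGen (hγ.1 _) rfl
  · obtain ⟨z, P, t, ht, rfl⟩ := h ε hε
    exact exists_isChain_of_reflTransGen P ht.1

theorem ChainTo.chainReach (hT : 0 < T) {a b : M} (h : ChainTo φ T a b) (hε : 0 < ε) :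
    ChainReach φ T ε a b :=
  (chainTo_iff_forall_chainReach hT).1 h ε hε

theorem Flow.exists_dist_lt_of_mem_Icc [CompactSpace M] (φ : Flow ℝ M) (a b : ℝ) {η : ℝ}
    (hη : 0 < η) :
    ∃ δ > 0, ∀ s ∈ Icc a b, ∀ y y' : M, dist y y' < δ → dist (φ s y) (φ s y') < η := by
  have : CompactSpace (Icc a b) := isCompact_iff_compactSpace.1 isCompact_Icc
  have huc : UniformContinuous fun p : Icc a b × M => φ p.1 p.2 :=
    CompactSpace.uniformContinuous_of_continuous
      (φ.continuous (continuous_subtype_val.comp continuous_fst) continuous_snd)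
  obtain ⟨δ, hδ, H⟩ := Metric.uniformContinuous_iff.1 huc η hη
  refine ⟨δ, hδ, fun s hs y y' hyy' => H (a := (⟨s, hs⟩, y)) (b := (⟨s, hs⟩, y')) ?_⟩
  simpa [Prod.dist_eq] using hyy'

theorem exists_pos_chainReach_from_chainRec [CompactSpace M] (hT : 0 < T) (hε : 0 < ε) :
    ∃ δ > 0, ∀ y ∈ ChainRec φ T, ∀ y', dist y y' < δ → ChainReach φ T ε y y' := by
  obtain ⟨δ, hδ, hφ⟩ := φ.exists_dist_lt_of_mem_Icc (-(2 * T)) (-T) (half_pos hε)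
  refine ⟨δ, hδ, fun y hy y' hyy' => ?_⟩
  have hyy := ChainTo.chainReach hT hy (half_pos hε)
  obtain ⟨z, hyz, r, hr, rfl⟩ := hyy.exists_transGen hyy (half_pos hε)
  obtain ⟨u, hyu, t, ht, hd⟩ := TransGen.tail'_iff.1 hyz
  have hz : dist z (φ (-r) y') < ε / 2 := by
    simpa [← φ.map_add] using
      hφ (-r) ⟨by linarith [hr.2], by linarith [hr.1]⟩ (φ r z) y' hyy'
  refine ⟨φ (-r) y', (ReflTransGen.mono (chainStep_mono (half_le_self hε.le)) _ _
    hyu).tail ⟨t, ht, ?_⟩, r, hr, by rw [← φ.map_add, add_neg_cancel, φ.map_zero_apply]⟩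
  calc dist (φ t u) (φ (-r) y') ≤ dist (φ t u) z + dist z (φ (-r) y') := dist_triangle _ _ _
    _ < ε := by linarith

theorem exists_pos_chainReach_to_chainRec [CompactSpace M] (hT : 0 < T) (hε : 0 < ε) :
    ∃ δ > 0, ∀ y ∈ ChainRec φ T, ∀ x, dist x y < δ → ChainReach φ T ε x y := by
  obtain ⟨δ, hδ, hφ⟩ := φ.exists_dist_lt_of_mem_Icc T (2 * T) (half_pos hε)
  refine ⟨δ, hδ, fun y hy x hxy => ?_⟩
  have hyy := ChainTo.chainReach hT hy (half_pos hε)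
  obtain ⟨z, hyz, hz⟩ := hyy.exists_transGen hyy (half_pos hε)
  obtain ⟨v, hyv, hvz⟩ := TransGen.head'_iff.1 hyz
  obtain ⟨s, hs, w, hw, hwv⟩ := hyv.exists_mem_Icc hT (half_pos hε)
  have hxw : ChainStep φ T ε x w := by
    refine ⟨s, hs.1, ?_⟩
    calc dist (φ s x) w ≤ dist (φ s x) (φ s y) + dist (φ s y) w := dist_triangle _ _ _
      _ < ε := by linarith [hφ s hs x y hxy]
  exact ⟨z, .head hxw (ReflTransGen.mono (chainStep_mono (half_le_self hε.le)) _ _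
    (hwv.trans hvz)), hz⟩

theorem isClosed_chainRec [CompactSpace M] (hT : 0 < T) : IsClosed (ChainRec φ T) := by
  refine isClosed_of_closure_subset fun x hx =>
    (chainTo_iff_forall_chainReach hT).2 fun ε hε => ?_
  obtain ⟨δ₁, hδ₁, hfrom⟩ := exists_pos_chainReach_from_chainRec (φ := φ) hT hε
  obtain ⟨δ₂, hδ₂, hto⟩ := exists_pos_chainReach_to_chainRec (φ := φ) hT hε
  obtain ⟨y, hy, hxy⟩ := Metric.mem_closure_iff.1 hx _ (lt_min hδ₁ hδ₂)
  exact (hto y hy x (hxy.trans_le (min_le_right _ _))).trans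
    (hfrom y hy x (by rw [dist_comm]; exact hxy.trans_le (min_le_left _ _))) hε

theorem isClopen_setOf_chainReach [CompactSpace M] (hT : 0 < T) (hε : 0 < ε) (a : M) :
    IsClopen {y : ChainRec φ T | ChainReach φ T ε a y} := by
  constructor
  · refine isClosed_of_closure_subset fun y hy => ?_
    obtain ⟨v, hv, hvy⟩ := Metric.mem_closure_iff.1 hy ε hε
    exact hv.trans_of_dist_lt (ChainTo.chainReach hT y.2 hε)
      (by rwa [dist_comm] at hvy)
  · obtain ⟨δ, hδ, hfrom⟩ := exists_pos_chainReach_from_chainRec (φ := φ) hT hε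
    refine Metric.isOpen_iff.2 fun y hy => ⟨δ, hδ, fun y' hy' => hy.trans (hfrom y y.2 y' ?_) hε⟩
    rw [Metric.mem_ball, dist_comm] at hy'
    exact hy'

theorem exists_isClopen_quot_of_not_chainTo [CompactSpace M] (hT : 0 < T)
    {a b : ChainRec φ T} (h : ¬ ChainTo φ T a b) :
    ∃ U : Set (Quot (RecRel φ T)), IsClopen U ∧ Quot.mk _ a ∈ U ∧ Quot.mk _ b ∉ U := by
  obtain ⟨ε, hε, hab⟩ : ∃ ε > 0, ¬ ChainReach φ T ε a b := by
    simpa [chainTo_iff_forall_chainReach hT] using h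
  have hsat (y z : ChainRec φ T) (hyz : RecRel φ T y z) :
      ChainReach φ T ε a y = ChainReach φ T ε a z :=
    propext ⟨fun hy => hy.trans (hyz.1.chainReach hT hε) hε,
      fun hz => hz.trans (hyz.2.chainReach hT hε) hε⟩
  refine ⟨{q | Quot.lift (fun y : ChainRec φ T => ChainReach φ T ε a y) hsat q},
    isQuotientMap_quot_mk.isClopen_preimage.1 (isClopen_setOf_chainReach (φ := φ) hT hε a),
    ChainTo.chainReach hT a.2 hε, hab⟩

theorem totallySeparatedSpace_quot_recRel [CompactSpace M] (hT : 0 < T) :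
    TotallySeparatedSpace (Quot (RecRel φ T)) := by
  rw [totallySeparatedSpace_iff_exists_isClopen]
  rintro ⟨a⟩ ⟨b⟩ hne
  rcases not_and_or.1 fun h => hne (Quot.sound h) with h | h
  · exact exists_isClopen_quot_of_not_chainTo hT h
  · obtain ⟨U, hU, hb, ha⟩ := exists_isClopen_quot_of_not_chainTo hT h
    exact ⟨Uᶜ, hU.compl, ha, not_not.2 hb⟩

end ChainReach

/-- Let `M` be a compact metric space and `φ` a continuous flow. The
quotient `Rec*` of the chain-recurrent set by mutual chain-reachability, with the
quotient topology, is compact and totally disconnected. -/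
theorem recurrence_chains_compact_totallyDisconnected
    {M : Type*} [MetricSpace M] [CompactSpace M]
    (φ : Flow ℝ M) (T : ℝ) (hT : 0 < T) :
    CompactSpace (Quot (RecRel φ T)) ∧ TotallyDisconnectedSpace (Quot (RecRel φ T)) := by
  have : CompactSpace (ChainRec φ T) :=
    isCompact_iff_compactSpace.1 (isClosed_chainRec hT).isCompact
  have := totallySeparatedSpace_quot_recRel (φ := φ) hT
  exact ⟨inferInstance, inferInstance⟩
end

section
/- Let M be a compact metric space, φ a continuous flow on M, and f : M → ℝ a continuous function that is constant on each recurrence chain, non-increasing along the flow, and such that f(Rec) is at most countable. Then f is pre-Lyapunov: for all x, y ∈ M, x ⇝ y implies f(x) ≥ f(y). -/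
open Filter Topology Set

lemma exists_avoid_countable {s : Set ℝ} (hs : s.Countable) {a b : ℝ} (hab : a < b) :
    ∃ c, a < c ∧ c < b ∧ c ∉ s := by
  have h1 : ¬ Set.Ioo a b ⊆ s := by
    intro h
    have h2 : (Set.Ioo a b).Countable := hs.mono h
    have h3 := Cardinal.le_aleph0_iff_set_countable.mpr h2
    rw [Cardinal.mk_Ioo_real hab] at h3
    exact absurd h3 (not_le.mpr Cardinal.aleph0_lt_continuum)
  obtain ⟨c, hc1, hc2⟩ := Set.not_subset.mp h1
  exact ⟨c, hc1.1, hc1.2, hc2⟩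

lemma chainTo_self_of_cluster {M : Type*} [MetricSpace M] (φ : Flow ℝ M) {T : ℝ}
    (z q : M) (s : ℕ → ℝ) (hs : Filter.Tendsto s Filter.atTop Filter.atTop)
    (hconv : Filter.Tendsto (fun k => φ (s k) z) Filter.atTop (nhds q)) :
    ChainTo φ T q q := by
  intro ε hε
  have ha : Filter.Tendsto (fun k => φ (T + s k) z) Filter.atTop (nhds (φ T q)) := by
    have := ((φ.continuous_toFun T).continuousAt (x := q)).tendsto.comp hconv
    simpa [Function.comp_def, φ.map_add] using this
  have hb : Filter.Tendsto (fun k => φ (-T + s k) z) Filter.atTop (nhds (φ (-T) q)) := by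
    have := ((φ.continuous_toFun (-T)).continuousAt (x := q)).tendsto.comp hconv
    simpa [Function.comp_def, φ.map_add] using this
  obtain ⟨k₁, hk₁⟩ := (Metric.tendsto_nhds.mp ha ε hε).exists
  obtain ⟨k₂, hd₂, hs₂⟩ :=
    ((Metric.tendsto_nhds.mp hb ε hε).and (hs.eventually_ge_atTop (s k₁ + 3 * T))).exists
  refine ⟨⟨2, ![q, φ (T + s k₁) z, φ (-T) q], ![T, (-T + s k₂) - (T + s k₁), T]⟩,
    ⟨?_, ?_⟩, ?_, ?_⟩
  · intro i
    fin_cases i <;> simp <;> linarith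
  · intro i
    fin_cases i
    · simpa [PreChain.IsChain, dist_comm] using hk₁
    · have he : φ ((-T + s k₂) - (T + s k₁)) (φ (T + s k₁) z) = φ (-T + s k₂) z := by
        rw [← φ.map_add]; ring_nf
      simpa [he] using hd₂
  · rfl
  · show φ T (φ (-T) q) = q
    rw [← φ.map_add]; simp

/-- Let `M` be a compact metric space, `φ` a continuous flow, and
`f : M → ℝ` continuous, constant on each recurrence chain, non-increasing along the
flow, and with `f(Rec)` at most countable. Then `f` is pre-Lyapunov:
`x ⇝ y` implies `f x ≥ f y`. -/
theorem preLyapunov_of_countable_values {M : Type*} [MetricSpace M] [CompactSpace M]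
    (φ : Flow ℝ M) (T : ℝ) (hT : 0 < T)
    (f : M → ℝ) (hf : Continuous f)
    (hconst : ∀ x ∈ ChainRec φ T, ∀ y ∈ ChainRec φ T,
      ChainTo φ T x y → ChainTo φ T y x → f x = f y)
    (hmono : ∀ x : M, ∀ t : ℝ, 0 ≤ t → f (φ t x) ≤ f x)
    (hcount : (f '' ChainRec φ T).Countable) :
    ∀ x y : M, ChainTo φ T x y → f y ≤ f x := by
  by_contra hcon
  push_neg at hcon
  obtain ⟨x, y, hxy, hlt⟩ := hcon
  obtain ⟨c, hc1, hc2, hc3⟩ := exists_avoid_countable hcount hlt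
  -- every point below level c eventually goes strictly below c
  have hpoint : ∀ w : M, f w ≤ c → ∃ t : ℝ, 0 ≤ t ∧ f (φ t w) < c := by
    intro w hw
    by_contra h'
    push_neg at h'
    have heq : ∀ t : ℝ, 0 ≤ t → f (φ t w) = c := fun t ht =>
      le_antisymm ((hmono w t ht).trans hw) (h' t ht)
    obtain ⟨q, -, σ, hσmono, hσconv⟩ :=
      isCompact_univ.tendsto_subseq (x := fun k : ℕ => φ (k : ℝ) w) (fun n => Set.mem_univ _)
    have hσtend : Filter.Tendsto (fun k => ((σ k : ℕ) : ℝ)) Filter.atTop Filter.atTop :=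
      tendsto_natCast_atTop_atTop.comp hσmono.tendsto_atTop
    have hq : ChainTo φ T q q :=
      chainTo_self_of_cluster φ w q _ hσtend (by exact hσconv)
    have hfq : f q = c := by
      have h1 : Filter.Tendsto (fun k => f (φ ((σ k : ℕ) : ℝ) w)) Filter.atTop (nhds (f q)) :=
        (hf.continuousAt.tendsto).comp hσconv
      have h2 : (fun k => f (φ ((σ k : ℕ) : ℝ) w)) = fun _ => c := by
        funext k; exact heq _ (Nat.cast_nonneg _)
      rw [h2] at h1
      exact tendsto_nhds_unique h1 tendsto_const_nhds
    exact hc3 ⟨q, hq, hfq⟩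
  -- the compact sublevel set
  set A : Set M := f ⁻¹' (Set.Iic c) with hA
  have hAc : IsCompact A := (IsClosed.preimage hf isClosed_Iic).isCompact
  have hxA : x ∈ A := le_of_lt hc1
  -- choose escape times
  choose tf htf0 htfc using fun (w : A) => hpoint w.1 w.2
  obtain ⟨sfin, hcov⟩ := hAc.elim_finite_subcover
      (fun w : A => {v : M | f (φ (tf w) v) < c})
      (fun w => (isOpen_Iio.preimage (hf.comp (φ.continuous_toFun (tf w)))))
      (fun v hv => Set.mem_iUnion.mpr ⟨⟨v, hv⟩, htfc ⟨v, hv⟩⟩)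
  set tb : ℝ := ∑ w ∈ sfin, tf w with htb
  have htb0 : 0 ≤ tb := Finset.sum_nonneg fun w _ => htf0 w
  have hA1 : ∀ w ∈ A, f (φ tb w) < c := by
    intro w hw
    obtain ⟨i, hi⟩ := Set.mem_iUnion₂.mp (hcov hw)
    obtain ⟨his, hwi⟩ := hi
    have h1 : tf i ≤ tb := Finset.single_le_sum (fun j _ => htf0 j) his
    have h2 : φ tb w = φ (tb - tf i) (φ (tf i) w) := by
      rw [← φ.map_add]; ring_nf
    rw [h2]
    exact lt_of_le_of_lt (hmono _ _ (by linarith)) hwi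
  -- the max of f ∘ φ tb on A
  obtain ⟨z₀, hz₀A, hz₀max'⟩ := hAc.exists_isMaxOn ⟨x, hxA⟩
      ((hf.comp (φ.continuous_toFun tb)).continuousOn)
  have hz₀max : ∀ w ∈ A, f (φ tb w) ≤ f (φ tb z₀) := hz₀max'
  set c' : ℝ := f (φ tb z₀) with hc'
  have hc'c : c' < c := hA1 z₀ hz₀A
  have hdrop : ∀ w : M, f w ≤ c → ∀ u : ℝ, tb ≤ u → f (φ u w) ≤ c' := by
    intro w hw u hu
    have h2 : φ u w = φ (u - tb) (φ tb w) := by rw [← φ.map_add]; ring_nf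
    rw [h2]
    exact le_trans (hmono _ _ (by linarith)) (hz₀max w hw)
  -- levels
  set c₂ : ℝ := (max c' (f x) + c) / 2 with hc₂
  have hmc : max c' (f x) < c := max_lt hc'c hc1
  have hc₂1 : c' < c₂ := by
    have := le_max_left c' (f x); simp only [hc₂]; linarith
  have hc₂2 : f x ≤ c₂ := by
    have := le_max_right c' (f x); simp only [hc₂]; linarith
  have hc₂3 : c₂ < c := by simp only [hc₂]; linarith
  set α₀ : ℝ := min (c₂ - c') (c - c₂) with hα₀
  have hα₀pos : 0 < α₀ := lt_min (by linarith) (by linarith)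
  -- uniform continuity of f
  obtain ⟨η, hη0, hηf'⟩ := Metric.uniformContinuous_iff.mp
    (CompactSpace.uniformContinuous_of_continuous hf) α₀ hα₀pos
  have hηf : ∀ a b : M, dist a b < η → |f a - f b| < α₀ := by
    intro a b hab
    have := hηf' hab
    rwa [Real.dist_eq] at this
  -- N
  obtain ⟨n₀, hn₀⟩ := exists_nat_ge (tb / T)
  set N : ℕ := n₀ + 1 with hN
  have hN1 : 0 < N := Nat.succ_pos _
  have hNT : tb ≤ (N : ℝ) * T := by
    rw [div_le_iff₀ hT] at hn₀
    have : (n₀ : ℝ) * T ≤ (N : ℝ) * T := by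
      apply mul_le_mul_of_nonneg_right _ hT.le
      simp [hN]
    linarith
  -- uniform continuity of the flow on [0, tb]
  have hΦ : ∀ α : ℝ, 0 < α → ∃ β : ℝ, 0 < β ∧
      ∀ a b : M, dist a b < β → ∀ u : ℝ, 0 ≤ u → u ≤ tb → dist (φ u a) (φ u b) < α := by
    intro α hα
    haveI : CompactSpace (Set.Icc (0:ℝ) tb) := isCompact_iff_compactSpace.mp isCompact_Icc
    have hFc : Continuous fun p : (Set.Icc (0:ℝ) tb) × M => φ p.1.1 p.2 :=
      φ.continuous (continuous_subtype_val.comp continuous_fst) continuous_snd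
    obtain ⟨β, hβ0, hβ⟩ := Metric.uniformContinuous_iff.mp
      (CompactSpace.uniformContinuous_of_continuous hFc) α hα
    refine ⟨β, hβ0, fun a b hab u hu1 hu2 => ?_⟩
    have : dist ((⟨⟨u, hu1, hu2⟩, a⟩ : (Set.Icc (0:ℝ) tb) × M) ) (⟨⟨u, hu1, hu2⟩, b⟩) < β := by
      rw [Prod.dist_eq]
      apply max_lt _ hab
      simpa [Subtype.dist_eq] using hβ0
    exact hβ this
  -- the decreasing sequence of moduli
  have hstep : ∀ r : {r : ℝ // 0 < r}, ∃ β : ℝ, 0 < β ∧ β ≤ r.1 / 2 ∧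
      ∀ a b : M, dist a b < β → ∀ u : ℝ, 0 ≤ u → u ≤ tb → dist (φ u a) (φ u b) < r.1 / 2 := by
    rintro ⟨r, hr⟩
    obtain ⟨β, hβ0, hβ⟩ := hΦ (r / 2) (by linarith)
    exact ⟨min β (r / 2), lt_min hβ0 (by linarith), min_le_right _ _,
      fun a b hab u h1 h2 => hβ a b (lt_of_lt_of_le hab (min_le_left _ _)) u h1 h2⟩
  choose g hg0 hg1 hg2 using hstep
  set D : ℕ → {r : ℝ // 0 < r} :=
    fun k => (fun p : {r : ℝ // 0 < r} => (⟨g p, hg0 p⟩ : {r : ℝ // 0 < r}))^[k] ⟨η, hη0⟩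
    with hD
  set δ : ℕ → ℝ := fun k => (D k).1 with hδ
  have hδ0 : δ 0 = η := rfl
  have hδpos : ∀ k, 0 < δ k := fun k => (D k).2
  have hDsucc : ∀ k, D (k + 1) = ⟨g (D k), hg0 (D k)⟩ := by
    intro k
    simp only [hD, Function.iterate_succ_apply']
  have hδval : ∀ k, δ (k + 1) = g (D k) := fun k => congrArg Subtype.val (hDsucc k)
  have hδsucc : ∀ k, δ (k + 1) ≤ δ k / 2 := fun k => (hδval k) ▸ hg1 (D k)
  have hδmod : ∀ k, ∀ a b : M, dist a b < δ (k + 1) →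
      ∀ u : ℝ, 0 ≤ u → u ≤ tb → dist (φ u a) (φ u b) < δ k / 2 := by
    intro k a b hab u h1 h2
    rw [hδval k] at hab
    exact hg2 (D k) a b hab u h1 h2
  have hδanti : ∀ j k : ℕ, j ≤ k → δ k ≤ δ j := by
    intro j k hjk
    induction k with
    | zero => simp at hjk; simp [hjk]
    | succ k ih =>
      rcases Nat.lt_or_ge j (k + 1) with h | h
      · have := ih (Nat.lt_succ_iff.mp h)
        have h2 := hδsucc k
        have h3 := hδpos k
        linarith
      · have : j = k + 1 := le_antisymm hjk h
        simp [this]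
  have hδη : ∀ k, δ k ≤ η := fun k => hδ0 ▸ hδanti 0 k (Nat.zero_le _)
  have hεkey : ∀ m, m < N → δ N ≤ δ m / 2 := by
    intro m hm
    exact le_trans (hδanti (m + 1) N hm) (hδsucc m)
  -- get the chain
  obtain ⟨γ, hγ, hγfirst, hγlast⟩ := hxy (δ N) (hδpos N)
  set x' : ℕ → M := fun i => γ.x ⟨min i γ.n, Nat.lt_succ_of_le (min_le_right _ _)⟩ with hx'
  set t' : ℕ → ℝ := fun i => γ.t ⟨min i γ.n, Nat.lt_succ_of_le (min_le_right _ _)⟩ with ht'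
  have ht'T : ∀ i, T ≤ t' i := fun i => hγ.1 _
  have ht'pos : ∀ i, 0 ≤ t' i := fun i => le_trans hT.le (ht'T i)
  have hjump : ∀ i, i < γ.n → dist (φ (t' i) (x' i)) (x' (i + 1)) < δ N := by
    intro i hi
    have h := hγ.2 ⟨i, hi⟩
    have e1 : (⟨min i γ.n, Nat.lt_succ_of_le (min_le_right _ _)⟩ : Fin (γ.n + 1)) =
        Fin.castSucc ⟨i, hi⟩ := by
      ext; simp [Nat.min_eq_left hi.le]
    have e2 : (⟨min (i+1) γ.n, Nat.lt_succ_of_le (min_le_right _ _)⟩ : Fin (γ.n + 1)) =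
        Fin.succ ⟨i, hi⟩ := by
      ext; simp [Nat.min_eq_left (Nat.succ_le_of_lt hi)]
    simp only [hx', ht', e1, e2]
    exact h
  have hx'0 : x' 0 = x := by
    have : (⟨min 0 γ.n, Nat.lt_succ_of_le (min_le_right _ _)⟩ : Fin (γ.n + 1)) = 0 := by
      ext; simp
    rw [hx']; simp only [this]; exact hγfirst
  have hlastf : f y = f (φ (t' γ.n) (x' γ.n)) := by
    have : (⟨min γ.n γ.n, Nat.lt_succ_of_le (min_le_right _ _)⟩ : Fin (γ.n + 1)) =
        Fin.last γ.n := by ext; simp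
    rw [← hγlast, hx', ht']
    simp only [this]
    rfl
  -- partial sums
  set S : ℕ → ℕ → ℝ := fun j k => ∑ l ∈ Finset.range k, t' (j + l) with hS
  have hS0 : ∀ j, S j 0 = 0 := by intro j; simp [hS]
  have hSsucc : ∀ j k, S j (k + 1) = S j k + t' (j + k) := by
    intro j k; simp [hS, Finset.sum_range_succ]
  have hSnonneg : ∀ j k, 0 ≤ S j k :=
    fun j k => Finset.sum_nonneg fun l _ => ht'pos _
  have hSge : ∀ j, (N : ℝ) * T ≤ S j N := by
    intro j
    have : ∑ l ∈ Finset.range N, T ≤ S j N :=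
      Finset.sum_le_sum fun l _ => ht'T (j + l)
    simpa using this
  -- the induction invariant
  set R : ℕ → Prop := fun i => ∃ j k : ℕ, j + k = i ∧ k < N ∧ f (x' j) ≤ c₂ ∧
      (∀ l, l < k → t' (j + l) < tb) ∧ dist (x' i) (φ (S j k) (x' j)) < δ (N - k) with hR
  have hRbound : ∀ i, R i → f (x' i) < c := by
    rintro i ⟨j, k, hjk, hkN, hfj, htl, hdist⟩
    have h1 : f (φ (S j k) (x' j)) ≤ c₂ := le_trans (hmono _ _ (hSnonneg j k)) hfj
    have h2 : |f (x' i) - f (φ (S j k) (x' j))| < α₀ :=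
      hηf _ _ (lt_of_lt_of_le hdist (hδη _))
    have h3 : α₀ ≤ c - c₂ := min_le_right _ _
    have := abs_lt.mp h2
    linarith [this.2]
  have main : ∀ i, i ≤ γ.n → R i := by
    intro i
    induction i with
    | zero =>
      intro _
      refine ⟨0, 0, rfl, hN1, ?_, fun l hl => absurd hl (Nat.not_lt_zero l), ?_⟩
      · rw [hx'0]; exact hc₂2
      · rw [hS0]
        simp [φ.map_zero_apply, hδpos N]
    | succ i ih =>
      intro hi1
      have hi : i < γ.n := hi1
      obtain ⟨j, k, hjk, hkN, hfj, htl, hdist⟩ := ih (le_of_lt hi)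
      have hfxi : f (x' i) < c := hRbound i ⟨j, k, hjk, hkN, hfj, htl, hdist⟩
      by_cases hcase : tb ≤ t' i
      · -- long segment: macro drop
        have h2 : f (φ (t' i) (x' i)) ≤ c' := hdrop _ hfxi.le _ hcase
        have h3 : |f (x' (i+1)) - f (φ (t' i) (x' i))| < α₀ := by
          apply hηf
          rw [dist_comm]
          exact lt_of_lt_of_le (hjump i hi) (hδη _)
        have h4 : α₀ ≤ c₂ - c' := min_le_left _ _
        have h5 : f (x' (i + 1)) ≤ c₂ := by
          have := abs_lt.mp h3
          linarith [this.2]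
        refine ⟨i + 1, 0, rfl, hN1, h5, fun l hl => absurd hl (Nat.not_lt_zero l), ?_⟩
        rw [hS0]
        simp [φ.map_zero_apply, hδpos N]
      · push_neg at hcase
        -- shadowing step
        have hmod := hδmod (N - k - 1)
        have hNk : N - k - 1 + 1 = N - k := by omega
        have e1 : dist (φ (t' i) (x' i)) (φ (t' i) (φ (S j k) (x' j))) < δ (N - k - 1) / 2 := by
          apply hmod _ _ (by rw [hNk]; exact hdist) (t' i) (ht'pos i) hcase.le
        have e2 : φ (S j (k+1)) (x' j) = φ (t' i) (φ (S j k) (x' j)) := by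
          rw [← φ.map_add, hSsucc, hjk]
          ring_nf
        have hd2 : dist (x' (i+1)) (φ (S j (k+1)) (x' j)) < δ (N - (k + 1)) := by
          have hj := hjump i hi
          have hε2 : δ N ≤ δ (N - k - 1) / 2 := hεkey _ (by omega)
          have heq2 : N - (k + 1) = N - k - 1 := by omega
          rw [heq2, e2]
          have htri := dist_triangle (x' (i+1)) (φ (t' i) (x' i))
            (φ (t' i) (φ (S j k) (x' j)))
          rw [dist_comm (x' (i+1)) (φ (t' i) (x' i))] at htri
          linarith
        have htl' : ∀ l, l < k + 1 → t' (j + l) < tb := by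
          intro l hl
          rcases Nat.lt_or_ge l k with h | h
          · exact htl l h
          · have : l = k := by omega
            rw [this, hjk]; exact hcase
        by_cases hk1 : k + 1 < N
        · exact ⟨j, k + 1, by omega, hk1, hfj, htl', hd2⟩
        · have hkN2 : k + 1 = N := by omega
          have hdN : dist (x' (i+1)) (φ (S j N) (x' j)) < η := by
            rw [← hkN2]
            have : N - (k + 1) = 0 := by omega
            rw [this] at hd2
            exact lt_of_lt_of_le hd2 (le_of_eq hδ0)
          have hdropN : f (φ (S j N) (x' j)) ≤ c' :=
            hdrop (x' j) (le_trans hfj hc₂3.le) _ (le_trans hNT (hSge j))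
          have h3 : |f (x' (i+1)) - f (φ (S j N) (x' j))| < α₀ := hηf _ _ hdN
          have h4 : α₀ ≤ c₂ - c' := min_le_left _ _
          have h5 : f (x' (i + 1)) ≤ c₂ := by
            have := abs_lt.mp h3
            linarith [this.2]
          refine ⟨i + 1, 0, rfl, hN1, h5, fun l hl => absurd hl (Nat.not_lt_zero l), ?_⟩
          rw [hS0]
          simp [φ.map_zero_apply, hδpos N]
  have hfinal : f (x' γ.n) < c := hRbound _ (main γ.n le_rfl)
  have : f y ≤ f (x' γ.n) := by
    rw [hlastf]
    exact hmono _ _ (ht'pos _)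
  linarith
end

section
/- Let M be a compact manifold, φ a continuous flow, and α ∈ H¹(M,ℤ) \ {0} a quasi-Lyapunov class. Then every recurrence chain R of the lifted flow in the ℤ-covering M̂_α is compact, and the covering projection π_α restricts to a homeomorphism from R onto its image in M. -/
/-! A continuous `α`-equivariant `f` increases by at most `C` along pseudo-orbits. If `y` and
`σ^k y` lie in one recurrence chain, translating the chain `y ⇝ σ^k y` by deck transformations
yields chains `y ⇝ σ^(km) y` on which `f` grows by `kmc`; bounded growth forces `kc = 0`, so `π`
is injective on the chain. The same bound confines the chain to the slab
`f⁻¹[f x₀ - C, f x₀ + C]`, which is compact because the deck group acts cocompactly and shifts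
`f` by `c ≠ 0`. The chain is closed since reachability passes to limits: one moves the end of
a pseudo-orbit by perturbing its last jump, after splitting the last flow segment so that its
duration lies in `[T, 2T]`, where the flow is equicontinuous (the start is moved by time
reversal). A continuous injection of a compact set into a Hausdorff space is an embedding. -/

namespace Equiv.Perm

variable {X : Type*} {σ : Equiv.Perm X}

theorem isometry_zpow [PseudoEMetricSpace X] (hσ : Isometry σ) (k : ℤ) : Isometry ⇑(σ ^ k) := by
  let e : X ≃ᵢ X := ⟨σ, hσ⟩
  have he : (e ^ k).toEquiv = σ ^ k :=
    map_zpow (MonoidHom.mk' (IsometryEquiv.toEquiv : (X ≃ᵢ X) → Equiv.Perm X) fun _ _ => rfl) e k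
  exact he ▸ (e ^ k).isometry

theorem apply_zpow_apply_eq_add {G : Type*} [AddCommGroup G] {f : X → G} {c : G}
    (h : ∀ x, f (σ x) = f x + c) (k : ℤ) (x : X) : f ((σ ^ k) x) = f x + k • c := by
  induction k using Int.induction_on generalizing x with
  | zero => simp
  | succ n ih =>
    rw [zpow_add_one, mul_apply, ih, h, add_zsmul, one_zsmul]
    abel
  | pred n ih =>
    have h' : f (σ⁻¹ x) = f x - c := eq_sub_of_add_eq (by rw [← h, coe_inv, Equiv.apply_symm_apply])
    rw [zpow_sub_one, mul_apply, ih, h', sub_zsmul, one_zsmul]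
    abel

end Equiv.Perm

theorem Flow.commute_zpow {τ X : Type*} [TopologicalSpace τ] [AddGroup τ] [ContinuousAdd τ]
    [TopologicalSpace X] (φ : Flow τ X) {σ : Equiv.Perm X} (h : ∀ t, Function.Commute (φ t) σ)
    (k : ℤ) (t : τ) : Function.Commute (φ t) ⇑(σ ^ k) :=
  fun x => Equiv.congr_fun
    (((show Commute (φ.toHomeomorph t).toEquiv σ from Equiv.ext (h t)).zpow_right k).eq) x

theorem IsCoveringMap.isClosed_range {E X : Type*} [TopologicalSpace E] [TopologicalSpace X]
    {p : E → X} (hp : IsCoveringMap p) : IsClosed (Set.range p) := by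
  refine isOpen_compl_iff.1 (isOpen_iff_mem_nhds.2 fun m hm => ?_)
  obtain ⟨-, U, hmU, hU, -, H, hH⟩ := hp m
  refine Filter.mem_of_superset (hU.mem_nhds hmU) ?_
  rintro _ hxU ⟨x, rfl⟩
  exact hm ⟨H.symm (⟨m, hmU⟩, (H ⟨x, hxU⟩).2), by simpa using (hH (H.symm (⟨m, hmU⟩, _))).symm⟩

theorem IsCoveringMap.exists_isCompact_forall_exists_zpow {E X : Type*} [TopologicalSpace E]
    [WeaklyLocallyCompactSpace E] [TopologicalSpace X] [CompactSpace X] {p : E → X}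
    (hp : IsCoveringMap p) {σ : Equiv.Perm E} (hdeck : ∀ x y, p x = p y → ∃ k : ℤ, (σ ^ k) x = y) :
    ∃ D : Set E, IsCompact D ∧ ∀ y, ∃ k : ℤ, ∃ z ∈ D, (σ ^ k) z = y := by
  choose K hK hKx using fun x : E => exists_compact_mem_nhds x
  obtain ⟨s, hs⟩ := hp.isClosed_range.isCompact.elim_finite_subcover
    (fun x => p '' interior (K x)) (fun x => hp.isOpenMap _ isOpen_interior)
    (by rintro _ ⟨x, rfl⟩; exact Set.mem_iUnion.2 ⟨x, x, mem_interior_iff_mem_nhds.2 (hKx x), rfl⟩)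
  refine ⟨⋃ x ∈ s, K x, s.isCompact_biUnion fun x _ => hK x, fun y => ?_⟩
  obtain ⟨x, hx, z, hz, hzy⟩ := Set.mem_iUnion₂.1 (hs ⟨y, rfl⟩)
  obtain ⟨k, hk⟩ := hdeck z y hzy
  exact ⟨k, z, Set.mem_biUnion hx (interior_subset hz), hk⟩

theorem isCompact_preimage_of_apply_eq_add {E : Type*} [PseudoMetricSpace E] {σ : Equiv.Perm E}
    (hσ : Isometry σ) {D : Set E} (hD : IsCompact D) (hcover : ∀ y, ∃ k : ℤ, ∃ z ∈ D, (σ ^ k) z = y)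
    {f : E → ℝ} (hf : Continuous f) {c : ℝ} (hc : c ≠ 0) (hfσ : ∀ x, f (σ x) = f x + c)
    {K : Set ℝ} (hK : IsCompact K) : IsCompact (f ⁻¹' K) := by
  obtain ⟨B, hB⟩ := hD.exists_bound_of_continuousOn hf.continuousOn
  obtain ⟨r, hr⟩ := hK.isBounded.exists_norm_le
  set N : ℕ := ⌈(r + B) / |c|⌉₊
  have hsub : f ⁻¹' K ⊆ ⋃ k ∈ Finset.Icc (-(N : ℤ)) N, (σ ^ k) '' D := by
    intro y hy
    obtain ⟨k, z, hz, rfl⟩ := hcover y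
    have hkc : |(k : ℝ)| * |c| ≤ r + B :=
      calc |(k : ℝ)| * |c| = |f ((σ ^ k) z) - f z| := by
            rw [Equiv.Perm.apply_zpow_apply_eq_add hfσ, add_sub_cancel_left, zsmul_eq_mul, abs_mul]
        _ ≤ |f ((σ ^ k) z)| + |f z| := abs_sub _ _
        _ ≤ r + B := add_le_add (hr _ hy) (hB z hz)
    have hk : |(k : ℝ)| ≤ N := ((le_div_iff₀ (abs_pos.2 hc)).2 hkc).trans (Nat.le_ceil _)
    replace hk : |k| ≤ N := by exact_mod_cast hk
    exact Set.mem_biUnion (Finset.mem_Icc.2 (abs_le.1 hk)) (Set.mem_image_of_mem _ hz)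
  exact (Finset.isCompact_biUnion _ fun k _ => hD.image (Equiv.Perm.isometry_zpow hσ k).continuous)
    |>.of_isClosed_subset (hK.isClosed.preimage hf) hsub

theorem IsCompact.exists_homeomorph_image {X Y : Type*} [TopologicalSpace X] [TopologicalSpace Y]
    [T2Space Y] {s : Set X} (hs : IsCompact s) {p : X → Y} (hp : Continuous p)
    (hinj : s.InjOn p) : ∃ e : s ≃ₜ p '' s, ∀ z, (e z : Y) = p z :=
  have : CompactSpace s := isCompact_iff_compactSpace.1 hs
  ⟨Continuous.homeoOfEquivCompactToT2 (f := hinj.bijOn_image.equiv p)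
    ((hp.comp continuous_subtype_val).subtype_mk _), fun _ => rfl⟩

namespace PreChain

variable {M : Type*}

def single (y : M) (s : ℝ) : PreChain M := ⟨0, fun _ => y, fun _ => s⟩

def snoc (γ : PreChain M) (y : M) (s : ℝ) : PreChain M :=
  ⟨γ.n + 1, Fin.snoc γ.x y, Fin.snoc γ.t s⟩

@[elab_as_elim]
theorem induction {motive : PreChain M → Prop} (single : ∀ y s, motive (single y s))
    (snoc : ∀ γ y s, motive γ → motive (snoc γ y s)) (γ : PreChain M) : motive γ := by
  obtain ⟨n, x, t⟩ := γ
  induction n with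
  | zero =>
    rw [show x = fun _ => x 0 from funext fun i => congrArg x (Fin.fin_one_eq_zero i),
      show t = fun _ => t 0 from funext fun i => congrArg t (Fin.fin_one_eq_zero i)]
    exact single _ _
  | succ n ih =>
    rw [← Fin.snoc_init_self x, ← Fin.snoc_init_self t]
    exact snoc ⟨n, Fin.init x, Fin.init t⟩ _ _ (ih _ _)

@[simp] theorem first_single (y : M) (s : ℝ) : (single y s).first = y := rfl

@[simp] theorem first_snoc (γ : PreChain M) (y : M) (s : ℝ) : (γ.snoc y s).first = γ.first :=
  Fin.snoc_castSucc (α := fun _ => M) (p := γ.x) (x := y) (i := 0)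

variable [MetricSpace M] {φ : Flow ℝ M} {T ε : ℝ}

@[simp] theorem lastPoint_single (y : M) (s : ℝ) : (single y s).lastPoint φ = φ s y := rfl

@[simp] theorem lastPoint_snoc (γ : PreChain M) (y : M) (s : ℝ) :
    (γ.snoc y s).lastPoint φ = φ s y := by
  simp [snoc, lastPoint]

@[simp] theorem isChain_single {y : M} {s : ℝ} : (single y s).IsChain φ T ε ↔ T ≤ s := by
  simp [single, IsChain]

@[simp] theorem isChain_snoc {γ : PreChain M} {y : M} {s : ℝ} :
    (γ.snoc y s).IsChain φ T ε ↔ γ.IsChain φ T ε ∧ dist (γ.lastPoint φ) y < ε ∧ T ≤ s := by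
  simp [snoc, IsChain, Fin.forall_fin_succ', lastPoint, -Fin.castSucc_succ, Fin.succ_castSucc]
  tauto

theorem IsChain.mono {γ : PreChain M} {ε' : ℝ} (h : γ.IsChain φ T ε) (hε : ε ≤ ε') :
    γ.IsChain φ T ε' :=
  ⟨h.1, fun i => (h.2 i).trans_le hε⟩

def reverse (φ : Flow ℝ M) (γ : PreChain M) : PreChain M :=
  ⟨γ.n, fun i => φ (γ.t i.rev) (γ.x i.rev), fun i => γ.t i.rev⟩

@[simp] theorem first_reverse (γ : PreChain M) : (γ.reverse φ).first = γ.lastPoint φ := by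
  change φ (γ.t (Fin.rev 0)) (γ.x (Fin.rev 0)) = _
  rw [Fin.rev_zero]
  rfl

@[simp] theorem lastPoint_reverse (γ : PreChain M) :
    (γ.reverse φ).lastPoint φ.reverse = γ.first := by
  simp [reverse, first, lastPoint, ← Flow.map_add]

theorem IsChain.reverse {γ : PreChain M} (h : γ.IsChain φ T ε) :
    (γ.reverse φ).IsChain φ.reverse T ε := by
  refine ⟨fun i => h.1 _, fun i => ?_⟩
  change dist (φ (-γ.t i.castSucc.rev) (φ (γ.t i.castSucc.rev) (γ.x i.castSucc.rev)))
    (φ (γ.t i.succ.rev) (γ.x i.succ.rev)) < ε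
  rw [Fin.rev_castSucc, Fin.rev_succ, ← Flow.map_add, neg_add_cancel, Flow.map_zero_apply,
    dist_comm]
  exact h.2 i.rev

theorem IsChain.exists_append {γ₁ γ₂ : PreChain M} (hγ₁ : γ₁.IsChain φ T ε)
    (hγ₂ : γ₂.IsChain φ T ε) (hε : 0 < ε) (h : γ₂.first = γ₁.lastPoint φ) :
    ∃ γ : PreChain M, γ.IsChain φ T ε ∧ γ.first = γ₁.first ∧ γ.lastPoint φ = γ₂.lastPoint φ := by
  induction γ₂ using PreChain.induction with
  | single y s =>
    exact ⟨γ₁.snoc y s, isChain_snoc.2 ⟨hγ₁, by simp_all, by simpa using hγ₂⟩, by simp, by simp⟩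
  | snoc γ y s ih =>
    rw [isChain_snoc] at hγ₂
    obtain ⟨γ', hγ', hγ'first, hγ'last⟩ := ih hγ₂.1 (by simpa using h)
    exact ⟨γ'.snoc y s, isChain_snoc.2 ⟨hγ', hγ'last ▸ hγ₂.2.1, hγ₂.2.2⟩, by simp [hγ'first],
      by simp⟩

end PreChain

open PreChain

section Chains

variable {M : Type*} [MetricSpace M] {φ : Flow ℝ M} {T : ℝ} {x y z : M}

theorem ChainTo.trans (hxy : ChainTo φ T x y) (hyz : ChainTo φ T y z) : ChainTo φ T x z := by
  intro ε hε
  obtain ⟨γ₁, hγ₁, rfl, rfl⟩ := hxy ε hε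
  obtain ⟨γ₂, hγ₂, hfirst, rfl⟩ := hyz ε hε
  exact hγ₁.exists_append hγ₂ hε hfirst

theorem ChainTo.reverse (h : ChainTo φ T x y) : ChainTo φ.reverse T y x := fun ε hε =>
  let ⟨γ, hγ, hx, hy⟩ := h ε hε
  ⟨γ.reverse φ, hγ.reverse, by simp [hy], by simp [hx]⟩

theorem chainTo_reverse_iff : ChainTo φ.reverse T y x ↔ ChainTo φ T x y :=
  ⟨fun h => by simpa [show φ.reverse.reverse = φ from Flow.ext fun _ _ => by simp] using h.reverse,
    ChainTo.reverse⟩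

theorem ChainTo.map {g : M → M} (hg : Isometry g) (hgφ : ∀ t x, φ t (g x) = g (φ t x))
    (h : ChainTo φ T x y) : ChainTo φ T (g x) (g y) := fun ε hε =>
  let ⟨γ, hγ, hx, hy⟩ := h ε hε
  ⟨⟨γ.n, g ∘ γ.x, γ.t⟩, ⟨hγ.1, fun i => by simpa [hgφ, hg.dist_eq] using hγ.2 i⟩,
    by simp [first, ← hx], by simp [lastPoint, hgφ, ← hy]⟩

open Filter Topology in
theorem Flow.eventually_forall_dist_lt {τ : Type*} [TopologicalSpace τ] [AddMonoid τ]
    [ContinuousAdd τ] (ψ : Flow τ M) {K : Set τ} (hK : IsCompact K) (y : M) {ε : ℝ}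
    (hε : 0 < ε) : ∀ᶠ z in 𝓝 y, ∀ s ∈ K, dist (ψ s z) (ψ s y) < ε :=
  hK.eventually_forall_of_forall_eventually fun _ _ =>
    ((ψ.continuous continuous_snd continuous_fst).dist
      (ψ.continuous continuous_snd continuous_const)).continuousAt.eventually_lt
      continuousAt_const (by simpa using hε)

theorem ChainTo.exists_isChain_near_flow_neg (hT : 0 ≤ T) (hx : ChainTo φ T x x)
    (hxy : ChainTo φ T x y) {ε : ℝ} (hε : 0 < ε) :
    ∃ s ∈ Set.Icc T (2 * T), ∃ γ : PreChain M,
      γ.IsChain φ T ε ∧ γ.first = x ∧ dist (γ.lastPoint φ) (φ (-s) y) < ε := by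
  obtain ⟨γ, hγ, rfl, rfl⟩ := hxy ε hε
  induction γ using PreChain.induction with
  | single y s =>
    rw [isChain_single] at hγ
    by_cases hs : 2 * T ≤ s
    · refine ⟨T, ⟨le_rfl, by linarith⟩, single y (s - T), by simpa using by linarith, rfl, ?_⟩
      simp [← Flow.map_add, sub_eq_neg_add, hε]
    · obtain ⟨γ₀, hγ₀, hfirst, hlast⟩ := hx ε hε
      exact ⟨s, ⟨hγ, by linarith⟩, γ₀, hγ₀, hfirst, by simp [← Flow.map_add, hlast, hε]⟩
  | snoc γ y s _ =>
    rw [isChain_snoc] at hγ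
    by_cases hs : 2 * T ≤ s
    · refine ⟨T, ⟨le_rfl, by linarith⟩, γ.snoc y (s - T),
        isChain_snoc.2 ⟨hγ.1, hγ.2.1, by linarith⟩, by simp, ?_⟩
      simp [← Flow.map_add, sub_eq_neg_add, hε]
    · exact ⟨s, ⟨hγ.2.2, by linarith⟩, γ, hγ.1, by simp, by simpa [← Flow.map_add] using hγ.2.1⟩

theorem isClosed_setOf_chainTo (hT : 0 ≤ T) (hx : ChainTo φ T x x) :
    IsClosed {y | ChainTo φ T x y} := by
  refine isClosed_of_closure_subset fun y hy ε hε => ?_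
  obtain ⟨y', hy'y, hxy'⟩ := mem_closure_iff_nhds.1 hy _
    (φ.reverse.eventually_forall_dist_lt (isCompact_Icc (a := T) (b := 2 * T)) y (half_pos hε))
  obtain ⟨s, hs, γ, hγ, rfl, hγs⟩ :=
    ChainTo.exists_isChain_near_flow_neg hT hx hxy' (half_pos hε)
  have hjump : dist (γ.lastPoint φ) (φ (-s) y) < ε :=
    calc dist (γ.lastPoint φ) (φ (-s) y)
        ≤ dist (γ.lastPoint φ) (φ (-s) y') + dist (φ (-s) y') (φ (-s) y) := dist_triangle ..
      _ < ε / 2 + ε / 2 := add_lt_add hγs (hy'y s hs)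
      _ = ε := add_halves ε
  exact ⟨γ.snoc (φ (-s) y) s, isChain_snoc.2 ⟨hγ.mono (half_le_self hε.le), hjump, hs.1⟩,
    first_snoc .., by simp [← Flow.map_add]⟩

theorem isClosed_setOf_chainTo_left (hT : 0 ≤ T) (hx : ChainTo φ T x x) :
    IsClosed {y | ChainTo φ T y x} := by
  simpa only [chainTo_reverse_iff] using isClosed_setOf_chainTo (φ := φ.reverse) hT hx.reverse

def recurrenceClass (φ : Flow ℝ M) (T : ℝ) (x₀ : M) : Set M :=
  {y | ChainTo φ T x₀ y ∧ ChainTo φ T y x₀}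

theorem isClosed_recurrenceClass (hT : 0 ≤ T) {x₀ : M} (hx₀ : ChainTo φ T x₀ x₀) :
    IsClosed (recurrenceClass φ T x₀) :=
  (isClosed_setOf_chainTo hT hx₀).inter (isClosed_setOf_chainTo_left hT hx₀)

theorem ChainTo.le_add_of_forall_isChain {f : M → ℝ} {C ε : ℝ} (hε : 0 < ε)
    (hbound : ∀ γ : PreChain M, γ.IsChain φ T ε → f (γ.lastPoint φ) - C ≤ f γ.first)
    (h : ChainTo φ T x y) : f y ≤ f x + C := by
  obtain ⟨γ, hγ, rfl, rfl⟩ := h ε hε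
  linarith [hbound γ hγ]

theorem isCompact_recurrenceClass (hT : 0 ≤ T) {x₀ : M} (hx₀ : ChainTo φ T x₀ x₀) {f : M → ℝ}
    {C : ℝ} (hlyap : ∀ a b, ChainTo φ T a b → f b ≤ f a + C)
    (hproper : ∀ K, IsCompact K → IsCompact (f ⁻¹' K)) : IsCompact (recurrenceClass φ T x₀) :=
  (hproper _ (isCompact_Icc (a := f x₀ - C) (b := f x₀ + C))).of_isClosed_subset
    (isClosed_recurrenceClass hT hx₀) fun y hy => ⟨by linarith [hlyap _ _ hy.2], by linarith [hlyap _ _ hy.1]⟩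

section Deck

variable {σ : Equiv.Perm M} (hσ : Isometry σ) (hσφ : ∀ t, Function.Commute (φ t) σ)
include hσ hσφ

theorem ChainTo.zpow_mul_succ {k : ℤ} (h : ChainTo φ T y ((σ ^ k) y)) (m : ℕ) :
    ChainTo φ T y ((σ ^ (k * (m + 1))) y) := by
  induction m with
  | zero => simpa using h
  | succ m ih =>
    have h' := h.map (Equiv.Perm.isometry_zpow hσ (k * (m + 1))) (φ.commute_zpow hσφ _)
    rw [← Equiv.Perm.mul_apply, ← zpow_add] at h'
    convert ih.trans h' using 3
    push_cast
    ring

variable {f : M → ℝ} {C c : ℝ} (hfσ : ∀ x, f (σ x) = f x + c)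
  (hlyap : ∀ a b, ChainTo φ T a b → f b ≤ f a + C)
include hfσ hlyap

theorem mul_nonpos_of_chainTo_zpow {k : ℤ} (h : ChainTo φ T y ((σ ^ k) y)) :
    k * c ≤ 0 := by
  by_contra! hpos
  obtain ⟨m, hm⟩ := exists_lt_nsmul hpos C
  have hle := hlyap _ _ (h.zpow_mul_succ hσ hσφ m)
  rw [Equiv.Perm.apply_zpow_apply_eq_add hfσ, zsmul_eq_mul] at hle
  rw [nsmul_eq_mul] at hm
  push_cast at hle
  nlinarith

theorem eq_zero_of_chainTo_zpow (hc : c ≠ 0) {k : ℤ} (h₁ : ChainTo φ T y ((σ ^ k) y))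
    (h₂ : ChainTo φ T ((σ ^ k) y) y) : k = 0 := by
  have h₂' : ChainTo φ T ((σ ^ k) y) ((σ ^ (-k)) ((σ ^ k) y)) := by
    rwa [← Equiv.Perm.mul_apply, ← zpow_add, neg_add_cancel, zpow_zero, Equiv.Perm.one_apply]
  have hk₁ := mul_nonpos_of_chainTo_zpow hσ hσφ hfσ hlyap h₁
  have hk₂ := mul_nonpos_of_chainTo_zpow hσ hσφ hfσ hlyap h₂'
  push_cast at hk₂
  exact_mod_cast (mul_eq_zero.1 (by linarith : (k : ℝ) * c = 0)).resolve_right hc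

theorem injOn_recurrenceClass {X : Type*} {π : M → X}
    (hdeck : ∀ x y, π x = π y → ∃ k : ℤ, (σ ^ k) x = y) (hc : c ≠ 0) (x₀ : M) :
    (recurrenceClass φ T x₀).InjOn π := by
  intro y hy y' hy' hπ
  obtain ⟨k, rfl⟩ := hdeck y _ hπ
  rw [eq_zero_of_chainTo_zpow hσ hσφ hfσ hlyap hc (hy.2.trans hy'.1) (hy'.2.trans hy.1), zpow_zero,
    Equiv.Perm.one_apply]

end Deck

end Chains

/- The ℤ-covering `M̂_α → M` associated to a nonzero integral class `α` is axiomatized: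
`π : Mh → M` is a covering map, `σ` generates the deck group (acting isometrically,
commuting with the lifted flow `φh`, and transitively on fibers), and `c = α(σ) ∈ ℤ`
is the nonzero value of `α` on the generator; `α`-equivariance of `f : Mh → ℝ` reads
`f (σ x) = f x + c`. `α` quasi-Lyapunov means every `α`-equivariant continuous map
satisfies the pseudo-orbit bound below. -/

theorem recurrence_chain_compact_embeds_general
    {M Mh : Type*} [MetricSpace M] [CompactSpace M] [MetricSpace Mh] [ProperSpace Mh]
    (φh : Flow ℝ Mh) (π : Mh → M) (hcov : IsCoveringMap π)
    (σ : Equiv.Perm Mh) (hiso : Isometry σ)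
    (hσφ : ∀ (t : ℝ) (xh : Mh), φh t (σ xh) = σ (φh t xh))
    (hdeck : ∀ xh yh : Mh, π xh = π yh → ∃ k : ℤ, (σ ^ k) xh = yh)
    (c : ℤ) (hc : c ≠ 0)
    (T : ℝ) (hT : 0 < T)
    (hfex : ∃ f : Mh → ℝ, Continuous f ∧ ∀ xh, f (σ xh) = f xh + c)
    (hqL : ∀ f : Mh → ℝ, Continuous f → (∀ xh, f (σ xh) = f xh + c) →
      ∃ C ≥ (0 : ℝ), ∃ ε > 0, ∀ γ : PreChain Mh, γ.IsChain φh T ε →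
        f (γ.lastPoint φh) - C ≤ f γ.first) :
    ∀ x₀ ∈ ChainRec φh T,
      IsCompact {y : Mh | ChainTo φh T x₀ y ∧ ChainTo φh T y x₀} ∧
      ∃ e : {y : Mh | ChainTo φh T x₀ y ∧ ChainTo φh T y x₀} ≃ₜ
          ↥(π '' {y : Mh | ChainTo φh T x₀ y ∧ ChainTo φh T y x₀}),
        ∀ z, (e z : M) = π (z : Mh) := by
  intro x₀ hx₀
  obtain ⟨f, hf, hfσ⟩ := hfex
  obtain ⟨C, -, ε, hε, hbound⟩ := hqL f hf hfσ
  have hlyap : ∀ a b, ChainTo φh T a b → f b ≤ f a + C := fun _ _ h =>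
    h.le_add_of_forall_isChain hε hbound
  have hc' : (c : ℝ) ≠ 0 := Int.cast_ne_zero.2 hc
  obtain ⟨D, hD, hcover⟩ := hcov.exists_isCompact_forall_exists_zpow hdeck
  have hR : IsCompact (recurrenceClass φh T x₀) := isCompact_recurrenceClass hT.le hx₀ hlyap
    fun _ hK => isCompact_preimage_of_apply_eq_add hiso hD hcover hf hc' hfσ hK
  exact ⟨hR, hR.exists_homeomorph_image hcov.continuous
    (injOn_recurrenceClass hiso hσφ hfσ hlyap hdeck hc' x₀)⟩

/-- If `α ∈ H¹(M,ℤ) \ {0}` is quasi-Lyapunov, then every recurrence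
chain `R` of the lifted flow on `M̂_α` is compact, and the covering projection
restricts to a homeomorphism from `R` onto its image in `M`. -/
theorem recurrence_chain_compact_embeds
    {M Mh : Type*} [MetricSpace M] [CompactSpace M] [MetricSpace Mh] [ProperSpace Mh]
    (φ : Flow ℝ M) (φh : Flow ℝ Mh) (π : Mh → M) (hcov : IsCoveringMap π)
    (hπφ : ∀ (t : ℝ) (xh : Mh), π (φh t xh) = φ t (π xh))
    (σ : Equiv.Perm Mh) (hiso : Isometry σ)
    (hπσ : ∀ xh, π (σ xh) = π xh)
    (hσφ : ∀ (t : ℝ) (xh : Mh), φh t (σ xh) = σ (φh t xh))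
    (hdeck : ∀ xh yh : Mh, π xh = π yh → ∃ k : ℤ, (σ ^ k) xh = yh)
    (c : ℤ) (hc : c ≠ 0)
    (T : ℝ) (hT : 0 < T)
    (hfex : ∃ f : Mh → ℝ, Continuous f ∧ ∀ xh, f (σ xh) = f xh + c)
    (hqL : ∀ f : Mh → ℝ, Continuous f → (∀ xh, f (σ xh) = f xh + c) →
      ∃ C ≥ (0 : ℝ), ∃ ε > 0, ∀ γ : PreChain Mh, γ.IsChain φh T ε →
        f (γ.lastPoint φh) - C ≤ f γ.first) :
    ∀ x₀ ∈ ChainRec φh T,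
      IsCompact {y : Mh | ChainTo φh T x₀ y ∧ ChainTo φh T y x₀} ∧
      ∃ e : {y : Mh | ChainTo φh T x₀ y ∧ ChainTo φh T y x₀} ≃ₜ
          ↥(π '' {y : Mh | ChainTo φh T x₀ y ∧ ChainTo φh T y x₀}),
        ∀ z, (e z : M) = π (z : Mh) :=
  recurrence_chain_compact_embeds_general φh π hcov σ hiso hσφ hdeck c hc T hT hfex hqL
end
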